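/- arXiv:math/0701075 — 6 statements merged into one kernel-verified Lean document; each statement's English description precedes it below -/
import Mathlib

section
/- On the complete graph K_n with n ≥ 2 vertices, every effective divisor D of degree at most n-2 satisfies r(D) ≤ 0; consequently the gonality of K_n is at least n-1. -/
open Finset

structure Multigraph (V : Type) [Fintype V] [DecidableEq V] : Type where
  mult : V → V → ℕ
  symm : ∀ u v : V, mult u v = mult v u
  loopless : ∀ v : V, mult v v = 0
  connected : ∀ u v : V, Relation.ReflTransGen (fun a b => 0 < mult a b) u v

def divDeg {V : Type} [Fintype V] (D : V → ℤ) : ℤ := ∑ v, D v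

def Effective {V : Type} (D : V → ℤ) : Prop := ∀ v, 0 ≤ D v

namespace Multigraph

variable {V : Type} [Fintype V] [DecidableEq V]

def degree (G : Multigraph V) (v : V) : ℕ := ∑ w, G.mult v w

def edgeCount (G : Multigraph V) : ℕ := (∑ v, G.degree v) / 2

def genus (G : Multigraph V) : ℤ := (G.edgeCount : ℤ) - (Fintype.card V : ℤ) + 1

def laplacian (G : Multigraph V) (f : V → ℤ) : V → ℤ :=
  fun v => ∑ w, (G.mult v w : ℤ) * (f v - f w)

def Principal (G : Multigraph V) (D : V → ℤ) : Prop := ∃ f : V → ℤ, D = G.laplacian f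

def Winnable (G : Multigraph V) (D : V → ℤ) : Prop :=
  ∃ E : V → ℤ, Effective E ∧ G.Principal (D - E)

noncomputable def rank (G : Multigraph V) (D : V → ℤ) : ℤ :=
  sSup (insert (-1) {k : ℤ | 0 ≤ k ∧ ∀ E : V → ℤ, Effective E → divDeg E = k →
    G.Winnable (D - E)})

end Multigraph

/-- The complete graph on n vertices. -/
def completeMG (n : ℕ) : Multigraph (Fin n) where
  mult := fun u v => if u = v then 0 else 1
  symm := by
    intro u v
    rcases eq_or_ne u v with rfl | h
    · rfl
    · simp only [if_neg h, if_neg (Ne.symm h)]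
  loopless := by intro v; simp
  connected := by
    intro u v
    rcases eq_or_ne u v with rfl | h
    · exact Relation.ReflTransGen.refl
    · exact Relation.ReflTransGen.single (by simp [h])

/-
On `K_n` the Laplacian is `Δf v = ∑ w, (f v - f w)`, so at a vertex where `f` is maximal it is at
least the number of vertices where `f` is not maximal. Let `D` be effective of degree at most
`n - 2`; some vertex `q` has `D q = 0`. If `D - q ~ E ≥ 0`, say `D - q - Δf = E`, then
`Δf q ≤ -1`, so `q` is not a maximum of `f`. If `a` vertices attain the maximum and `b ≥ 1` do not,
then `D ≥ Δf ≥ b` on each of the `a` maximal vertices, so `deg D ≥ a b ≥ a + b - 1 = n - 1`,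
a contradiction. Hence `r(D) ≤ 0`. Since the rank is invariant under linear equivalence, a divisor
of rank at least `1` may be replaced by an equivalent effective one, which gives the gonality bound.
-/

lemma divDeg_sub {V : Type} [Fintype V] (D E : V → ℤ) :
    divDeg (D - E) = divDeg D - divDeg E := by
  simp only [divDeg, Pi.sub_apply, sum_sub_distrib]

lemma effective_single {V : Type} [DecidableEq V] (q : V) {k : ℤ} (hk : 0 ≤ k) :
    Effective (Pi.single q k) := fun v => by
  rw [Pi.single_apply]
  split_ifs <;> omega

lemma exists_eq_zero_of_divDeg_lt_card {V : Type} [Fintype V] {D : V → ℤ} (hD : Effective D)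
    (hdeg : divDeg D < Fintype.card V) : ∃ q, D q = 0 := by
  by_contra! hne
  have hcard : (Fintype.card V : ℤ) ≤ divDeg D := by
    calc (Fintype.card V : ℤ) = ∑ _v : V, (1 : ℤ) := by simp
      _ ≤ divDeg D := sum_le_sum fun v _ => by have := hD v; have := hne v; omega
  omega

namespace Multigraph

variable {V : Type} [Fintype V] [DecidableEq V] {G : Multigraph V}

lemma laplacian_add (f g : V → ℤ) : G.laplacian (f + g) = G.laplacian f + G.laplacian g := by
  funext v
  simp only [laplacian, Pi.add_apply, ← sum_add_distrib]
  exact sum_congr rfl fun w _ => by ring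

lemma laplacian_sub (f g : V → ℤ) : G.laplacian (f - g) = G.laplacian f - G.laplacian g := by
  funext v
  simp only [laplacian, Pi.sub_apply, ← sum_sub_distrib]
  exact sum_congr rfl fun w _ => by ring

lemma divDeg_laplacian (f : V → ℤ) : divDeg (G.laplacian f) = 0 := by
  have hswap : ∑ v, ∑ w, (G.mult v w : ℤ) * f w = ∑ v, ∑ w, (G.mult v w : ℤ) * f v := by
    rw [sum_comm]
    simp only [G.symm]
  simp only [divDeg, laplacian, mul_sub, sum_sub_distrib, hswap, sub_self]

lemma laplacian_nonneg_of_forall_le (f : V → ℤ) {v : V} (hv : ∀ w, f w ≤ f v) :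
    0 ≤ G.laplacian f v :=
  sum_nonneg fun w _ => mul_nonneg (Nat.cast_nonneg _) (sub_nonneg.2 (hv w))

lemma winnable_iff_exists_effective_sub_laplacian {D : V → ℤ} :
    G.Winnable D ↔ ∃ f, Effective (D - G.laplacian f) := by
  constructor
  · rintro ⟨E, hE, f, hf⟩
    exact ⟨f, by rwa [← hf, sub_sub_cancel]⟩
  · rintro ⟨f, hf⟩
    exact ⟨_, hf, f, sub_sub_cancel _ _⟩

lemma Winnable.mono {D D' : V → ℤ} (hD : G.Winnable D) (h : D ≤ D') : G.Winnable D' := by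
  obtain ⟨f, hf⟩ := winnable_iff_exists_effective_sub_laplacian.1 hD
  exact winnable_iff_exists_effective_sub_laplacian.2
    ⟨f, fun v => (hf v).trans (by simpa using h v)⟩

lemma winnable_sub_laplacian_iff {D : V → ℤ} (f : V → ℤ) :
    G.Winnable (D - G.laplacian f) ↔ G.Winnable D := by
  simp only [winnable_iff_exists_effective_sub_laplacian]
  constructor
  · rintro ⟨g, hg⟩
    exact ⟨f + g, by rwa [laplacian_add, ← sub_sub]⟩
  · rintro ⟨g, hg⟩
    exact ⟨g - f, by rwa [laplacian_sub, sub_sub, add_sub_cancel]⟩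

lemma rank_sub_laplacian (D f : V → ℤ) : G.rank (D - G.laplacian f) = G.rank D := by
  simp only [rank, sub_right_comm D (G.laplacian f), winnable_sub_laplacian_iff]

lemma winnable_sub_single_of_one_le_rank {D : V → ℤ} (h : 1 ≤ G.rank D) (q : V) :
    G.Winnable (D - Pi.single q 1) := by
  obtain ⟨k, hk, hk0⟩ := exists_lt_of_lt_csSup ⟨-1, Set.mem_insert _ _⟩ (by omega : 0 < G.rank D)
  rcases hk with rfl | ⟨-, hall⟩
  · omega
  have hwin := hall (Pi.single q k) (effective_single q hk0.le) (by simp [divDeg])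
  exact hwin.mono (sub_le_sub_left (Pi.single_mono q (show (1 : ℤ) ≤ k by omega)) D)

lemma winnable_of_one_le_rank [Nonempty V] {D : V → ℤ} (h : 1 ≤ G.rank D) : G.Winnable D :=
  (winnable_sub_single_of_one_le_rank h (Classical.arbitrary V)).mono
    (sub_le_self _ (effective_single _ zero_le_one))

end Multigraph

open Multigraph

lemma completeMG_laplacian {n : ℕ} (f : Fin n → ℤ) (v : Fin n) :
    (completeMG n).laplacian f v = ∑ w, (f v - f w) := by
  refine sum_congr rfl fun w _ => ?_
  rcases eq_or_ne v w with rfl | h <;> simp [completeMG, *]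

lemma card_ne_le_completeMG_laplacian {n : ℕ} {f : Fin n → ℤ} {v : Fin n}
    (hv : ∀ w, f w ≤ f v) : (#{w | f w ≠ f v} : ℤ) ≤ (completeMG n).laplacian f v := by
  rw [completeMG_laplacian, natCast_card_filter]
  exact sum_le_sum fun w _ => by have := hv w; split_ifs <;> omega

lemma completeMG_sub_one_le_divDeg {n : ℕ} {D f : Fin n → ℤ} (hD : Effective D)
    (hfD : ∀ v, (completeMG n).laplacian f v ≤ D v) {q : Fin n}
    (hq : (completeMG n).laplacian f q < 0) : (n : ℤ) - 1 ≤ divDeg D := by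
  have : Nonempty (Fin n) := ⟨q⟩
  obtain ⟨v₀, hv₀⟩ := Finite.exists_max f
  set A := ({w | f w = f v₀} : Finset (Fin n))
  set B := ({w | f w ≠ f v₀} : Finset (Fin n))
  have hqB : q ∈ B := by
    simp only [B, mem_filter, mem_univ, true_and]
    intro hq₀
    have := laplacian_nonneg_of_forall_le (G := completeMG n) f fun w => hq₀ ▸ hv₀ w
    omega
  have hA : 1 ≤ #A := card_pos.2 ⟨v₀, by simp [A]⟩
  have hB : 1 ≤ #B := card_pos.2 ⟨q, hqB⟩
  have hAB : #A + #B = n := by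
    simpa using card_filter_add_card_filter_not (s := univ) (fun w => f w = f v₀)
  have hbound : (#A : ℤ) * #B ≤ divDeg D := by
    calc (#A : ℤ) * #B = ∑ _v ∈ A, (#B : ℤ) := by simp
      _ ≤ ∑ v ∈ A, D v := sum_le_sum fun v hv => by
          have hfv : f v = f v₀ := (mem_filter.1 hv).2
          have hcard := card_ne_le_completeMG_laplacian (f := f) (v := v) fun w => hfv ▸ hv₀ w
          rw [hfv] at hcard
          exact hcard.trans (hfD v)
      _ ≤ divDeg D := sum_le_sum_of_subset_of_nonneg (subset_univ A) fun v _ _ => hD v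
  have hAB' : (#A : ℤ) + #B = n := by exact_mod_cast hAB
  nlinarith [mul_nonneg (sub_nonneg.2 (show (1 : ℤ) ≤ #A by exact_mod_cast hA))
    (sub_nonneg.2 (show (1 : ℤ) ≤ #B by exact_mod_cast hB))]

lemma completeMG_not_winnable_sub_single {n : ℕ} {D : Fin n → ℤ} (hD : Effective D)
    (hdeg : divDeg D ≤ n - 2) {q : Fin n} (hq : D q = 0) :
    ¬ (completeMG n).Winnable (D - Pi.single q 1) := by
  rw [winnable_iff_exists_effective_sub_laplacian]
  rintro ⟨f, hf⟩
  have hle : ∀ v, (completeMG n).laplacian f v + (Pi.single q 1 : Fin n → ℤ) v ≤ D v := fun v => by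
    have := hf v
    simp only [Pi.sub_apply] at this
    linarith
  have hlap_q : (completeMG n).laplacian f q < 0 := by
    have := hle q
    rw [Pi.single_eq_same] at this
    omega
  have := completeMG_sub_one_le_divDeg hD
    (fun v => by linarith [hle v, effective_single q zero_le_one v]) hlap_q
  omega

lemma completeMG_rank_le_zero {n : ℕ} {D : Fin n → ℤ} (hD : Effective D)
    (hdeg : divDeg D ≤ n - 2) : (completeMG n).rank D ≤ 0 := by
  by_contra! hpos
  obtain ⟨q, hq⟩ := exists_eq_zero_of_divDeg_lt_card hD (by rw [Fintype.card_fin]; omega)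
  exact completeMG_not_winnable_sub_single hD hdeg hq
    (winnable_sub_single_of_one_le_rank (by omega) q)

/-- On the complete graph K_n (n ≥ 2), every effective divisor of degree at most
n - 2 has rank at most 0; consequently every divisor of rank at least 1 has degree
at least n - 1, i.e., the gonality of K_n is at least n - 1. -/
theorem complete_graph_gonality_lower_bound (n : ℕ) (hn : 2 ≤ n) :
    (∀ D : Fin n → ℤ, Effective D → divDeg D ≤ (n : ℤ) - 2 →
      (completeMG n).rank D ≤ 0) ∧
    (∀ d : ℤ, (∃ D : Fin n → ℤ, divDeg D = d ∧ 1 ≤ (completeMG n).rank D) →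
      (n : ℤ) - 1 ≤ d) := by
  refine ⟨fun D hD hdeg => completeMG_rank_le_zero hD hdeg, ?_⟩
  rintro d ⟨D, rfl, hrank⟩
  by_contra! hdeg
  have : Nonempty (Fin n) := ⟨⟨0, by omega⟩⟩
  obtain ⟨f, hf⟩ := winnable_iff_exists_effective_sub_laplacian.1 (winnable_of_one_le_rank hrank)
  have hrank' := completeMG_rank_le_zero hf (by rw [divDeg_sub, divDeg_laplacian]; omega)
  rw [rank_sub_laplacian] at hrank'
  omega
end

section
/- On the complete graph K_n with n ≥ 2 vertices, for any vertex v₀, the divisor D = Σ_{v ≠ v₀} (v) of degree n-1 satisfies r(D) ≥ 1. Combined with the lower bound, the gonality of K_n equals n-1. -/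
open Finset

-- ==== auxiliary lemmas ====

theorem myemod_le {b : ℤ} (hb : 0 < b) {a c : ℤ} (hc : 0 ≤ c) (h : b ∣ (a - c)) : a % b ≤ c := by
  obtain ⟨k, hk⟩ := h
  have ha : a = c + b * k := by linarith
  rw [ha, Int.add_mul_emod_self_left]
  calc c % b = c - b * (c / b) := by rw [Int.emod_def]
  _ ≤ c := by
      have : 0 ≤ c / b := Int.ediv_nonneg hc hb.le
      nlinarith

theorem lap_complete (n : ℕ) (f : Fin n → ℤ) (v : Fin n) :
    (completeMG n).laplacian f v = (n : ℤ) * f v - ∑ w, f w := by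
  have h : ∀ w, ((completeMG n).mult v w : ℤ) * (f v - f w) = f v - f w := by
    intro w
    rcases eq_or_ne v w with rfl | h
    · simp [completeMG]
    · simp [completeMG, h]
  show (∑ w, ((completeMG n).mult v w : ℤ) * (f v - f w)) = _
  rw [Finset.sum_congr rfl fun w _ => h w, Finset.sum_sub_distrib, Finset.sum_const,
    Finset.card_univ, Fintype.card_fin]
  push_cast
  ring

theorem winnable_of (n : ℕ) (D : Fin n → ℤ) (f : Fin n → ℤ)
    (h : ∀ v, 0 ≤ D v - ((n : ℤ) * f v - ∑ w, f w)) : (completeMG n).Winnable D :=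
  ⟨fun v => D v - ((n : ℤ) * f v - ∑ w, f w), h,
   f, by funext v; simp only [Pi.sub_apply, lap_complete]; ring⟩

theorem divDeg_lap {V : Type} [Fintype V] [DecidableEq V] (G : Multigraph V) (f : V → ℤ) :
    divDeg (G.laplacian f) = 0 := by
  have key : (∑ v, ∑ w, (G.mult v w : ℤ) * (f v - f w))
      = -∑ v, ∑ w, (G.mult v w : ℤ) * (f v - f w) := by
    conv_lhs => rw [Finset.sum_comm]
    rw [← Finset.sum_neg_distrib]
    refine Finset.sum_congr rfl fun v _ => ?_
    rw [← Finset.sum_neg_distrib]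
    refine Finset.sum_congr rfl fun w _ => ?_
    rw [G.symm]
    ring
  have h2 : divDeg (G.laplacian f) = ∑ v, ∑ w, (G.mult v w : ℤ) * (f v - f w) := rfl
  linarith [key, h2]

theorem winnable_deg_nonneg {V : Type} [Fintype V] [DecidableEq V] (G : Multigraph V)
    (D : V → ℤ) (h : G.Winnable D) : 0 ≤ divDeg D := by
  obtain ⟨E, hE, f, hf⟩ := h
  have h1 : divDeg (D - E) = 0 := by rw [hf]; exact divDeg_lap G f
  have h2 : divDeg (D - E) = divDeg D - divDeg E := by
    simp only [divDeg, Pi.sub_apply, Finset.sum_sub_distrib]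
  have h3 : 0 ≤ divDeg E := Finset.sum_nonneg fun v _ => hE v
  linarith

theorem delta_deg (n : ℕ) (w : Fin n) (k : ℤ) :
    divDeg (fun v => if v = w then k else 0) = k := by
  simp [divDeg, Finset.sum_ite_eq']

theorem key (n : ℕ) (hn : 2 ≤ n) (D : Fin n → ℤ) (d k : ℤ)
    (hdeg : divDeg D = d) (hd0 : 0 ≤ d) (hd : d ≤ (n : ℤ) - 2)
    (hk1 : 1 ≤ k) (hkd : k ≤ d) (w : Fin n)
    (hw : (completeMG n).Winnable (D - fun v => if v = w then k else 0)) :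
    ∃ c : ℤ, (∑ v, (D v - c) % (n : ℤ)) = d ∧ k ≤ (D w - c) % (n : ℤ) := by
  classical
  obtain ⟨E', hE', f, hf⟩ := hw
  set M : ℤ := (n : ℤ) with hM
  have hM0 : 0 < M := by rw [hM]; exact_mod_cast (by omega : 0 < n)
  set c : ℤ := -(∑ v, f v) with hc
  have hfv : ∀ v, E' v = D v - (if v = w then k else 0) - c - M * f v := by
    intro v
    have h := congrFun hf v
    simp only [Pi.sub_apply] at h
    rw [lap_complete] at h
    rw [hc, hM]
    linarith
  set t : Fin n → ℤ := fun v => (D v - (if v = w then k else 0) - c) % M with ht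
  have ht0 : ∀ v, 0 ≤ t v := fun v => Int.emod_nonneg _ (ne_of_gt hM0)
  have htE : ∀ v, t v ≤ E' v := by
    intro v
    refine myemod_le hM0 (hE' v) ⟨f v, ?_⟩
    rw [hfv v]; ring
  have hsumE : ∑ v, E' v = d - k := by
    calc ∑ v, E' v = ∑ v, (D v - (if v = w then k else 0) - c - M * f v) :=
          Finset.sum_congr rfl fun v _ => hfv v
    _ = d - k := by
        have hdd : ∑ v, D v = d := hdeg
        rw [Finset.sum_sub_distrib, Finset.sum_sub_distrib, Finset.sum_sub_distrib,
          Finset.sum_const, ← Finset.mul_sum, Finset.sum_ite_eq']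
        simp only [Finset.card_univ, Fintype.card_fin, Finset.mem_univ, if_true,
          nsmul_eq_mul]
        rw [hdd, hc, hM]
        ring
  have hsumt_le : ∑ v, t v ≤ d - k := by
    calc ∑ v, t v ≤ ∑ v, E' v := Finset.sum_le_sum fun v _ => htE v
    _ = d - k := hsumE
  have hsumt0 : 0 ≤ ∑ v, t v := Finset.sum_nonneg fun v _ => ht0 v
  have hdvd : M ∣ ((d - k) - ∑ v, t v) := by
    rw [← hsumE, ← Finset.sum_sub_distrib]
    refine Finset.dvd_sum fun v _ => ?_
    refine ⟨(D v - (if v = w then k else 0) - c) / M - f v, ?_⟩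
    rw [hfv v, ht]
    simp only
    rw [Int.emod_def]
    ring
  have hsumt : ∑ v, t v = d - k := by
    obtain ⟨j, hj⟩ := hdvd
    have hjlt : j < 1 := by
      by_contra hcon
      push_neg at hcon
      have : M ≤ M * j := le_mul_of_one_le_right hM0.le hcon
      linarith
    have hjge : 0 ≤ j := by
      by_contra hcon
      push_neg at hcon
      have hj1 : j ≤ -1 := by omega
      have : M * j ≤ M * (-1) := by
        exact mul_le_mul_of_nonneg_left hj1 hM0.le
      linarith
    have : j = 0 := by omega
    rw [this, mul_zero] at hj
    linarith
  set u : ℤ := (D w - c) % M with hu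
  have hu0 : 0 ≤ u := Int.emod_nonneg _ (ne_of_gt hM0)
  have huM : u < M := Int.emod_lt_of_pos _ hM0
  have htw : t w = (D w - k - c) % M := by simp [ht]
  have htwM : t w < M := by rw [htw]; exact Int.emod_lt_of_pos _ hM0
  -- M ∣ (u - k - t w)
  have hrel : M ∣ (u - k - t w) := by
    refine ⟨(D w - k - c) / M - (D w - c) / M, ?_⟩
    rw [hu, htw, Int.emod_def, Int.emod_def]
    ring
  -- sum of (D v - c) % M
  have hG : ∑ v, (D v - c) % M = (∑ v, t v) + (u - t w) := by
    have : ∑ v, ((D v - c) % M - t v) = u - t w := by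
      have h0 : ∀ b ∈ Finset.univ, b ≠ w → (D b - c) % M - t b = 0 := by
        intro b _ hb
        simp [ht, hb]
      have h1 : w ∉ Finset.univ → (D w - c) % M - t w = 0 := fun h =>
        absurd (Finset.mem_univ w) h
      rw [Finset.sum_eq_single w h0 h1]
    have h2 : ∑ v, ((D v - c) % M - t v) = (∑ v, (D v - c) % M) - ∑ v, t v := by
      rw [Finset.sum_sub_distrib]
    linarith
  have hG0 : 0 ≤ ∑ v, (D v - c) % M :=
    Finset.sum_nonneg fun v _ => Int.emod_nonneg _ (ne_of_gt hM0)
  obtain ⟨j2, hj2⟩ := hrel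
  have hj2cases : j2 = 0 ∨ j2 = -1 := by
    have h1 : M * j2 < M := by linarith [ht0 w]
    have h2 : -2 * M + 3 ≤ M * j2 := by linarith [htwM, hu0, hkd, hd]
    have hjlt : j2 < 1 := by
      by_contra hcon; push_neg at hcon
      have : M ≤ M * j2 := le_mul_of_one_le_right hM0.le hcon
      linarith
    have hjge : -1 ≤ j2 := by
      by_contra hcon; push_neg at hcon
      have : j2 ≤ -2 := by omega
      have : M * j2 ≤ M * (-2) := mul_le_mul_of_nonneg_left this hM0.le
      linarith
    omega
  rcases hj2cases with h | h
  · rw [h, mul_zero] at hj2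
    refine ⟨c, ?_, by linarith [ht0 w]⟩
    rw [hG, hsumt]
    linarith
  · exfalso
    rw [h] at hj2
    have : t w = u - k + M := by linarith
    rw [hG, hsumt, this] at hG0
    linarith

theorem delta_eff (n : ℕ) (w : Fin n) (k : ℤ) (hk : 0 ≤ k) :
    Effective (fun v => if v = w then k else 0) := by
  intro v; dsimp only; split <;> omega

theorem mem_S_le_deg (n : ℕ) (hn : 2 ≤ n) (D : Fin n → ℤ) (k : ℤ) (h0 : 0 ≤ k)
    (h : ∀ E : Fin n → ℤ, Effective E → divDeg E = k → (completeMG n).Winnable (D - E)) :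
    k ≤ divDeg D := by
  let w : Fin n := ⟨0, by omega⟩
  have hw := h (fun v => if v = w then k else 0) (delta_eff n w k h0) (delta_deg n w k)
  have h1 := winnable_deg_nonneg _ _ hw
  have h2 : divDeg (D - fun v => if v = w then k else 0) = divDeg D - k := by
    simp only [divDeg, Pi.sub_apply, Finset.sum_sub_distrib, Finset.sum_ite_eq',
      Finset.mem_univ, if_true]
  linarith

theorem rank_one (n : ℕ) (hn : 2 ≤ n) (v₀ : Fin n) :
    1 ≤ (completeMG n).rank (fun v => if v = v₀ then 0 else 1) := by
  set D₀ : Fin n → ℤ := fun v => if v = v₀ then (0:ℤ) else 1 with hD₀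
  have hdeg : divDeg D₀ = (n : ℤ) - 1 := by
    simp only [hD₀, divDeg]
    calc ∑ v : Fin n, (if v = v₀ then (0:ℤ) else 1)
        = ∑ v : Fin n, ((1:ℤ) - if v = v₀ then (1:ℤ) else 0) := by
          refine Finset.sum_congr rfl fun v _ => ?_
          split <;> ring
    _ = (n:ℤ) - 1 := by
        rw [Finset.sum_sub_distrib, Finset.sum_const, Finset.sum_ite_eq']
        simp
  have h1 : (1:ℤ) ∈ insert (-1) {k : ℤ | 0 ≤ k ∧ ∀ E : Fin n → ℤ, Effective E →
      divDeg E = k → (completeMG n).Winnable (D₀ - E)} := by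
    refine Set.mem_insert_iff.mpr (Or.inr ⟨by norm_num, ?_⟩)
    intro E hE hdegE
    obtain ⟨w, hw⟩ : ∃ w, 0 < E w := by
      by_contra hcon
      push_neg at hcon
      have : divDeg E ≤ 0 := Finset.sum_nonpos fun v _ => hcon v
      omega
    have hEw : ∀ v, E v = if v = w then 1 else 0 := by
      intro v
      rcases eq_or_ne v w with rfl | hv
      · rw [if_pos rfl]
        have h2 : E v + ∑ x ∈ Finset.univ.erase v, E x = 1 := by
          rw [Finset.add_sum_erase Finset.univ E (Finset.mem_univ v)]
          exact hdegE
        have h3 : 0 ≤ ∑ x ∈ Finset.univ.erase v, E x :=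
          Finset.sum_nonneg fun x _ => hE x
        omega
      · rw [if_neg hv]
        by_contra hcon
        have h4 : 1 ≤ E v := by have := hE v; omega
        have h5 : E v + E w ≤ ∑ x, E x := by
          calc E v + E w = ∑ x ∈ ({v, w} : Finset (Fin n)), E x := (Finset.sum_pair hv).symm
          _ ≤ ∑ x, E x := Finset.sum_le_sum_of_subset_of_nonneg (Finset.subset_univ _)
              fun x _ _ => hE x
        have hdd : ∑ x, E x = 1 := hdegE
        omega
    rcases eq_or_ne w v₀ with rfl | hwv
    · refine winnable_of n _ (fun v => if v = w then -1 else 0) ?_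
      intro v
      have hfs : ∑ x : Fin n, (if x = w then (-1:ℤ) else 0) = -1 := by
        rw [Finset.sum_ite_eq']; simp
      simp only [Pi.sub_apply, hEw v, hfs, hD₀]
      have h2n : (2:ℤ) ≤ (n:ℤ) := by exact_mod_cast hn
      rcases eq_or_ne v w with rfl | hv
      · simp only [if_pos rfl, if_true]
        norm_num
        linarith
      · simp only [if_neg hv]
        linarith
    · refine winnable_of n _ 0 ?_
      intro v
      simp only [Pi.sub_apply, hEw v, hD₀, Pi.zero_apply, mul_zero, Finset.sum_const_zero]
      rcases eq_or_ne v w with rfl | hv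
      · simp [hwv]
      · rcases eq_or_ne v v₀ with rfl | hv0
        · simp [hv]
        · simp [hv, hv0]
  have hbdd : BddAbove (insert (-1) {k : ℤ | 0 ≤ k ∧ ∀ E : Fin n → ℤ, Effective E →
      divDeg E = k → (completeMG n).Winnable (D₀ - E)}) := by
    refine ⟨(n:ℤ) - 1, ?_⟩
    rintro x hx
    rcases hx with rfl | hx
    · have : (2:ℤ) ≤ (n:ℤ) := by exact_mod_cast hn
      linarith
    · exact hdeg ▸ mem_S_le_deg n hn D₀ x hx.1 hx.2
  exact le_csSup hbdd h1

theorem lower (n : ℕ) (hn : 2 ≤ n) (D : Fin n → ℤ) (d : ℤ) (hd0 : 0 ≤ d)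
    (hdeg : divDeg D = d) (hr : 1 ≤ (completeMG n).rank D) : (n:ℤ) - 1 ≤ d := by
  classical
  by_contra hcon
  push_neg at hcon
  have hd : d ≤ (n:ℤ) - 2 := by omega
  have hM0 : (0:ℤ) < (n:ℤ) := by exact_mod_cast (by omega : 0 < n)
  set S := {k : ℤ | 0 ≤ k ∧ ∀ E : Fin n → ℤ, Effective E → divDeg E = k →
    (completeMG n).Winnable (D - E)} with hS
  have hne : (insert (-1) S).Nonempty := ⟨-1, Set.mem_insert _ _⟩
  have hbdd : BddAbove (insert (-1) S) := by
    refine ⟨d, ?_⟩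
    rintro x hx
    rcases hx with rfl | hx
    · omega
    · exact hdeg ▸ mem_S_le_deg n hn D x hx.1 hx.2
  have hmem := Int.csSup_mem hne hbdd
  have hr' : (1:ℤ) ≤ sSup (insert (-1) S) := hr
  rcases hmem with h | h
  · rw [h] at hr'; omega
  set k := sSup (insert (-1) S) with hk
  obtain ⟨hk0, hkS⟩ := h
  have hk1 : (1:ℤ) ≤ k := hr'
  have hkd : k ≤ d := hdeg ▸ mem_S_le_deg n hn D k hk0 hkS
  have happ : ∀ w : Fin n, ∃ c : ℤ, (∑ v, (D v - c) % (n:ℤ)) = d ∧ k ≤ (D w - c) % (n:ℤ) :=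
    fun w => key n hn D d k hdeg hd0 hd hk1 hkd w
      (hkS _ (delta_eff n w k hk0) (delta_deg n w k))
  obtain ⟨c₁, hc₁, _⟩ := happ ⟨0, by omega⟩
  obtain ⟨w₂, hw₂⟩ : ∃ w, (D w - c₁) % (n:ℤ) = 0 := by
    by_contra hno
    push_neg at hno
    have h1 : ∀ v : Fin n, 1 ≤ (D v - c₁) % (n:ℤ) := by
      intro v
      have := Int.emod_nonneg (D v - c₁) (ne_of_gt hM0)
      have := hno v
      omega
    have h2 : (n:ℤ) ≤ ∑ v, (D v - c₁) % (n:ℤ) := by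
      calc (n:ℤ) = ∑ _v : Fin n, (1:ℤ) := by simp
      _ ≤ _ := Finset.sum_le_sum fun v _ => h1 v
    omega
  obtain ⟨c₂, hc₂, hc₂w⟩ := happ w₂
  have hndvd : ¬ ((n:ℤ) ∣ (c₂ - c₁)) := by
    rintro ⟨j, hj⟩
    have heq : (D w₂ - c₂) % (n:ℤ) = (D w₂ - c₁) % (n:ℤ) := by
      have hre : D w₂ - c₂ = (D w₂ - c₁) + (n:ℤ) * (-j) := by
        rw [mul_neg, ← hj]
        ring
      rw [hre, Int.add_mul_emod_self_left]
    rw [heq, hw₂] at hc₂w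
    omega
  set p := (c₂ - c₁) % (n:ℤ) with hp
  set q := (c₁ - c₂) % (n:ℤ) with hq
  have hp0 : 0 ≤ p := Int.emod_nonneg _ (ne_of_gt hM0)
  have hpM : p < (n:ℤ) := Int.emod_lt_of_pos _ hM0
  have hq0 : 0 ≤ q := Int.emod_nonneg _ (ne_of_gt hM0)
  have hqM : q < (n:ℤ) := Int.emod_lt_of_pos _ hM0
  have hpq : p + q = (n:ℤ) := by
    have hdv : (n:ℤ) ∣ (p + q) := by
      refine ⟨-((c₂ - c₁)/(n:ℤ)) - ((c₁ - c₂)/(n:ℤ)), ?_⟩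
      rw [hp, hq, Int.emod_def, Int.emod_def]
      ring
    have hpne : p ≠ 0 := by
      intro h0
      exact hndvd (Int.dvd_of_emod_eq_zero h0)
    have hqne : q ≠ 0 := by
      intro h0
      obtain ⟨j, hj⟩ := Int.dvd_of_emod_eq_zero h0
      exact hndvd ⟨-j, by linarith⟩
    have hppos : 0 < p := lt_of_le_of_ne hp0 (Ne.symm hpne)
    have hqpos : 0 < q := lt_of_le_of_ne hq0 (Ne.symm hqne)
    obtain ⟨j, hj⟩ := hdv
    have hjpos : 0 < j := by
      by_contra hcj
      push_neg at hcj
      have : (n:ℤ) * j ≤ 0 := mul_nonpos_of_nonneg_of_nonpos hM0.le hcj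
      linarith
    have hjlt : j < 2 := by
      by_contra hcj
      push_neg at hcj
      have : (n:ℤ) * 2 ≤ (n:ℤ) * j := mul_le_mul_of_nonneg_left hcj hM0.le
      linarith
    have hj1 : j = 1 := by omega
    rw [hj1, mul_one] at hj
    linarith
  -- residue classes
  set A := Finset.univ.filter (fun v => (D v - c₁) % (n:ℤ) = 0) with hA
  set B := Finset.univ.filter (fun v => (D v - c₂) % (n:ℤ) = 0) with hB
  -- for v in B, (D v - c₁) % n = p ; for v in A, (D v - c₂) % n = q
  have hBp : ∀ v ∈ B, (D v - c₁) % (n:ℤ) = p := by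
    intro v hv
    obtain ⟨j, hj⟩ := Int.dvd_of_emod_eq_zero ((Finset.mem_filter.mp hv).2)
    have : D v - c₁ = (c₂ - c₁) + (n:ℤ) * j := by linarith
    rw [this, Int.add_mul_emod_self_left, hp]
  have hAq : ∀ v ∈ A, (D v - c₂) % (n:ℤ) = q := by
    intro v hv
    obtain ⟨j, hj⟩ := Int.dvd_of_emod_eq_zero ((Finset.mem_filter.mp hv).2)
    have : D v - c₂ = (c₁ - c₂) + (n:ℤ) * j := by linarith
    rw [this, Int.add_mul_emod_self_left, hq]
  -- (B.card : ℤ) * p ≤ d and (A.card : ℤ) * q ≤ d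
  have hBle : (B.card : ℤ) * p ≤ d := by
    have h1 : ∑ v ∈ B, (D v - c₁) % (n:ℤ) = (B.card : ℤ) * p := by
      rw [Finset.sum_congr rfl hBp, Finset.sum_const, nsmul_eq_mul]
    have h2 : ∑ v ∈ B, (D v - c₁) % (n:ℤ) ≤ ∑ v, (D v - c₁) % (n:ℤ) :=
      Finset.sum_le_sum_of_subset_of_nonneg (Finset.subset_univ _)
        (fun v _ _ => Int.emod_nonneg _ (ne_of_gt hM0))
    rw [h1] at h2
    linarith [hc₁, h2]
  have hAle : (A.card : ℤ) * q ≤ d := by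
    have h1 : ∑ v ∈ A, (D v - c₂) % (n:ℤ) = (A.card : ℤ) * q := by
      rw [Finset.sum_congr rfl hAq, Finset.sum_const, nsmul_eq_mul]
    have h2 : ∑ v ∈ A, (D v - c₂) % (n:ℤ) ≤ ∑ v, (D v - c₂) % (n:ℤ) :=
      Finset.sum_le_sum_of_subset_of_nonneg (Finset.subset_univ _)
        (fun v _ _ => Int.emod_nonneg _ (ne_of_gt hM0))
    rw [h1] at h2
    linarith [hc₂, h2]
  -- cardinality lower bounds : (n : ℤ) - card ≤ d
  have hcardA : (n:ℤ) - (A.card : ℤ) ≤ d := by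
    have h1 : Finset.card (Finset.univ.filter (fun v => ¬ ((D v - c₁) % (n:ℤ) = 0)))
        + A.card = n := by
      rw [hA, add_comm]
      rw [Finset.card_filter_add_card_filter_not]
      simp
    have h2 : ((Finset.univ.filter (fun v => ¬ ((D v - c₁) % (n:ℤ) = 0))).card : ℤ)
        ≤ ∑ v ∈ Finset.univ.filter (fun v => ¬ ((D v - c₁) % (n:ℤ) = 0)),
            (D v - c₁) % (n:ℤ) := by
      rw [Finset.card_eq_sum_ones]
      push_cast
      refine Finset.sum_le_sum fun v hv => ?_
      have hne0 := (Finset.mem_filter.mp hv).2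
      have := Int.emod_nonneg (D v - c₁) (ne_of_gt hM0)
      omega
    have h3 : ∑ v ∈ Finset.univ.filter (fun v => ¬ ((D v - c₁) % (n:ℤ) = 0)),
        (D v - c₁) % (n:ℤ) ≤ ∑ v, (D v - c₁) % (n:ℤ) :=
      Finset.sum_le_sum_of_subset_of_nonneg (Finset.subset_univ _)
        (fun v _ _ => Int.emod_nonneg _ (ne_of_gt hM0))
    have h4 : ((Finset.univ.filter (fun v => ¬ ((D v - c₁) % (n:ℤ) = 0))).card : ℤ)
        = (n:ℤ) - (A.card : ℤ) := by
      have := h1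
      omega
    rw [h4] at h2
    linarith [hc₁]
  have hcardB : (n:ℤ) - (B.card : ℤ) ≤ d := by
    have h1 : Finset.card (Finset.univ.filter (fun v => ¬ ((D v - c₂) % (n:ℤ) = 0)))
        + B.card = n := by
      rw [hB, add_comm]
      rw [Finset.card_filter_add_card_filter_not]
      simp
    have h2 : ((Finset.univ.filter (fun v => ¬ ((D v - c₂) % (n:ℤ) = 0))).card : ℤ)
        ≤ ∑ v ∈ Finset.univ.filter (fun v => ¬ ((D v - c₂) % (n:ℤ) = 0)),
            (D v - c₂) % (n:ℤ) := by
      rw [Finset.card_eq_sum_ones]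
      push_cast
      refine Finset.sum_le_sum fun v hv => ?_
      have hne0 := (Finset.mem_filter.mp hv).2
      have := Int.emod_nonneg (D v - c₂) (ne_of_gt hM0)
      omega
    have h3 : ∑ v ∈ Finset.univ.filter (fun v => ¬ ((D v - c₂) % (n:ℤ) = 0)),
        (D v - c₂) % (n:ℤ) ≤ ∑ v, (D v - c₂) % (n:ℤ) :=
      Finset.sum_le_sum_of_subset_of_nonneg (Finset.subset_univ _)
        (fun v _ _ => Int.emod_nonneg _ (ne_of_gt hM0))
    have h4 : ((Finset.univ.filter (fun v => ¬ ((D v - c₂) % (n:ℤ) = 0))).card : ℤ)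
        = (n:ℤ) - (B.card : ℤ) := by
      have := h1
      omega
    rw [h4] at h2
    linarith [hc₂]
  -- final contradiction
  have ha2 : (2:ℤ) ≤ (A.card : ℤ) := by linarith
  have hb2 : (2:ℤ) ≤ (B.card : ℤ) := by linarith
  have hnd2 : (2:ℤ) ≤ (n:ℤ) - d := by linarith
  have hf1 : ((n:ℤ) - d) * q ≤ (A.card : ℤ) * q :=
    mul_le_mul_of_nonneg_right (by linarith) hq0
  have hf2 : ((n:ℤ) - d) * p ≤ (B.card : ℤ) * p :=
    mul_le_mul_of_nonneg_right (by linarith) hp0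
  have hf3 : ((n:ℤ) - d) * ((n:ℤ)) ≤ 2 * d := by nlinarith
  have hf4 : 2 * (n:ℤ) ≤ ((n:ℤ) - d) * (n:ℤ) :=
    mul_le_mul_of_nonneg_right hnd2 hM0.le
  linarith

theorem degD0 (n : ℕ) (v₀ : Fin n) :
    divDeg (fun v : Fin n => if v = v₀ then (0:ℤ) else 1) = (n:ℤ) - 1 := by
  simp only [divDeg]
  calc ∑ v : Fin n, (if v = v₀ then (0:ℤ) else 1)
      = ∑ v : Fin n, ((1:ℤ) - if v = v₀ then (1:ℤ) else 0) := by
        refine Finset.sum_congr rfl fun v _ => ?_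
        split <;> ring
  _ = (n:ℤ) - 1 := by
      rw [Finset.sum_sub_distrib, Finset.sum_const, Finset.sum_ite_eq']
      simp

theorem complete_graph_gonality' (n : ℕ) (hn : 2 ≤ n) (v₀ : Fin n) :
    1 ≤ (completeMG n).rank (fun v => if v = v₀ then 0 else 1) ∧
    sInf {d : ℕ | 0 < d ∧ ∃ D : Fin n → ℤ, divDeg D = (d : ℤ) ∧
      1 ≤ (completeMG n).rank D} = n - 1 := by
  constructor
  · exact rank_one n hn v₀
  · have hmem : (n - 1) ∈ {d : ℕ | 0 < d ∧ ∃ D : Fin n → ℤ, divDeg D = (d : ℤ) ∧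
        1 ≤ (completeMG n).rank D} := by
      refine ⟨by omega, fun v => if v = v₀ then 0 else 1, ?_, rank_one n hn v₀⟩
      rw [degD0 n v₀]
      omega
    refine le_antisymm (Nat.sInf_le hmem) ?_
    refine le_csInf ⟨n - 1, hmem⟩ ?_
    rintro m ⟨hm0, D, hdegm, hrm⟩
    have := lower n hn D (m:ℤ) (by positivity) hdegm hrm
    omega

/-- On K_n (n ≥ 2), for any vertex v₀ the divisor D = Σ_{v ≠ v₀} (v) of degree
n - 1 has rank at least 1, and the gonality of K_n equals n - 1. -/
theorem complete_graph_gonality (n : ℕ) (hn : 2 ≤ n) (v₀ : Fin n) :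
    1 ≤ (completeMG n).rank (fun v => if v = v₀ then 0 else 1) ∧
    sInf {d : ℕ | 0 < d ∧ ∃ D : Fin n → ℤ, divDeg D = (d : ℤ) ∧
      1 ≤ (completeMG n).rank D} = n - 1 :=
  complete_graph_gonality' n hn v₀
end

section
/- Let g, r, d be nonnegative integers. If g - (r+1)(g-d+r) ≥ 0, then every finite connected multigraph of genus g ≤ 3 with r = 1 and d = ⌊(g+3)/2⌋ admits a divisor D with r(D) = 1 and deg(D) ≤ ⌊(g+3)/2⌋; i.e., every graph of genus g ≤ 3 has gonality at most ⌊(g+3)/2⌋. -/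
open Finset

set_option linter.unusedSectionVars false
set_option linter.unnecessarySimpa false

namespace GonAux

open Multigraph

variable {V : Type} [Fintype V] [DecidableEq V]

/-- the divisor with a single chip at `v` -/
def delta (v : V) : V → ℤ := fun w => if w = v then 1 else 0

lemma delta_nonneg (v : V) : Effective (delta v) := by
  intro w; unfold delta; split <;> simp

lemma divDeg_delta (v : V) : divDeg (delta v) = 1 := by
  unfold divDeg delta; simp

lemma divDeg_sub (D E : V → ℤ) : divDeg (D - E) = divDeg D - divDeg E := by
  unfold divDeg; simpa using Finset.sum_sub_distrib

lemma divDeg_add (D E : V → ℤ) : divDeg (D + E) = divDeg D + divDeg E := by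
  unfold divDeg; simpa using Finset.sum_add_distrib

variable (G : Multigraph V)

lemma lap_sub (f g : V → ℤ) : G.laplacian (f - g) = G.laplacian f - G.laplacian g := by
  funext v
  simp only [laplacian, Pi.sub_apply]
  rw [← Finset.sum_sub_distrib]
  congr 1; funext w; ring

lemma lap_add (f g : V → ℤ) : G.laplacian (f + g) = G.laplacian f + G.laplacian g := by
  funext v
  simp only [laplacian, Pi.add_apply]
  rw [← Finset.sum_add_distrib]
  congr 1; funext w; ring

lemma lap_zero : G.laplacian 0 = 0 := by
  funext v; simp [laplacian]

lemma lap_smul (n : ℤ) (f : V → ℤ) : G.laplacian (n • f) = n • G.laplacian f := by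
  funext v
  simp only [laplacian, Pi.smul_apply, smul_eq_mul, Finset.mul_sum]
  congr 1; funext w; ring

lemma principal_add {A B : V → ℤ} (hA : G.Principal A) (hB : G.Principal B) :
    G.Principal (A + B) := by
  obtain ⟨f, hf⟩ := hA; obtain ⟨g, hg⟩ := hB
  exact ⟨f + g, by rw [hf, hg, lap_add]⟩

lemma principal_neg {A : V → ℤ} (hA : G.Principal A) : G.Principal (-A) := by
  obtain ⟨f, hf⟩ := hA
  exact ⟨0 - f, by rw [hf, lap_sub, lap_zero]; ring⟩

lemma principal_sub {A B : V → ℤ} (hA : G.Principal A) (hB : G.Principal B) :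
    G.Principal (A - B) := by
  have := principal_add G hA (principal_neg G hB)
  simpa [sub_eq_add_neg] using this

lemma principal_zero : G.Principal 0 := ⟨0, (lap_zero G).symm⟩

lemma divDeg_lap (f : V → ℤ) : divDeg (G.laplacian f) = 0 := by
  unfold divDeg laplacian
  have hS : (∑ v, ∑ w, (G.mult v w : ℤ) * (f v - f w)) =
      -(∑ v, ∑ w, (G.mult v w : ℤ) * (f v - f w)) := by
    conv_lhs => rw [Finset.sum_comm]
    have : ∀ w v : V, (G.mult v w : ℤ) * (f v - f w) =
        -((G.mult w v : ℤ) * (f w - f v)) := by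
      intro w v; rw [G.symm w v]; ring
    calc ∑ w, ∑ v, (G.mult v w : ℤ) * (f v - f w)
        = ∑ w, ∑ v, -((G.mult w v : ℤ) * (f w - f v)) := by
          apply Finset.sum_congr rfl; intro w _
          apply Finset.sum_congr rfl; intro v _
          exact this w v
      _ = -(∑ w, ∑ v, (G.mult w v : ℤ) * (f w - f v)) := by
          simp
  linarith

lemma winnable_of_principal_sub {D D' : V → ℤ} (h : G.Principal (D - D'))
    (hw : G.Winnable D') : G.Winnable D := by
  obtain ⟨E, hE, hP⟩ := hw
  refine ⟨E, hE, ?_⟩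
  have : D - E = (D - D') + (D' - E) := by ring
  rw [this]
  exact principal_add G h hP

lemma winnable_of_effective {E : V → ℤ} (hE : Effective E) : G.Winnable E :=
  ⟨E, hE, by simpa using principal_zero G⟩

lemma divDeg_eq_of_principal_sub {D D' : V → ℤ} (h : G.Principal (D - D')) :
    divDeg D = divDeg D' := by
  obtain ⟨f, hf⟩ := h
  have := divDeg_lap G f
  rw [← hf, divDeg_sub] at this
  linarith

lemma winnable_deg_nonneg {D : V → ℤ} (hw : G.Winnable D) : 0 ≤ divDeg D := by
  obtain ⟨E, hE, hP⟩ := hw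
  have h1 := divDeg_eq_of_principal_sub G hP
  have h2 : 0 ≤ divDeg E := Finset.sum_nonneg (fun v _ => hE v)
  omega

lemma effective_degZero_eq_zero {E : V → ℤ} (hE : Effective E) (h : divDeg E = 0) :
    E = 0 := by
  funext v
  have := (Finset.sum_eq_zero_iff_of_nonneg (fun v _ => hE v)).1 h v (Finset.mem_univ v)
  simpa using this

lemma divDeg_mono {A B : V → ℤ} (h : ∀ v, A v ≤ B v) : divDeg A ≤ divDeg B :=
  Finset.sum_le_sum (fun v _ => h v)

lemma effective_degOne {E : V → ℤ} (hE : Effective E) (h : divDeg E = 1) :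
    ∃ v, E = delta v := by
  by_contra hc
  push_neg at hc
  -- every vertex has E v = 0 leads to contradiction; find v with E v ≥ 1
  have h1 : ∃ v, 1 ≤ E v := by
    by_contra hc2
    push_neg at hc2
    have : divDeg E ≤ 0 := Finset.sum_nonpos (fun v _ => by have := hc2 v; omega)
    omega
  obtain ⟨v, hv⟩ := h1
  have hsplit : divDeg E = E v + ∑ w ∈ Finset.univ.erase v, E w := by
    unfold divDeg
    rw [← Finset.add_sum_erase _ _ (Finset.mem_univ v)]
  have hrest : 0 ≤ ∑ w ∈ Finset.univ.erase v, E w :=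
    Finset.sum_nonneg (fun w _ => hE w)
  have hEv : E v = 1 := by omega
  have hrest0 : ∑ w ∈ Finset.univ.erase v, E w = 0 := by omega
  have hall : ∀ w ∈ Finset.univ.erase v, E w = 0 :=
    (Finset.sum_eq_zero_iff_of_nonneg (fun w _ => hE w)).1 hrest0
  apply hc v
  funext w
  unfold delta
  by_cases hw : w = v
  · simp [hw, hEv]
  · simp [hw]
    exact hall w (Finset.mem_erase.2 ⟨hw, Finset.mem_univ w⟩)

lemma winnable_add_effective {D E : V → ℤ} (hD : G.Winnable D) (hE : Effective E) :
    G.Winnable (D + E) := by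
  obtain ⟨E₀, hE₀, hP⟩ := hD
  refine ⟨E₀ + E, fun v => add_nonneg (hE₀ v) (hE v), ?_⟩
  have : D + E - (E₀ + E) = D - E₀ := by ring
  rw [this]; exact hP

/-- the divisor associated to the acyclic orientation induced by `π` -/
def nuD (G : Multigraph V) (π : V → ℕ) : V → ℤ :=
  fun v => (∑ u ∈ Finset.univ.filter (fun u => π u < π v), (G.mult u v : ℤ)) - 1

def KD (G : Multigraph V) : V → ℤ := fun v => (G.degree v : ℤ) - 2

lemma nu_unwinnable (π : V → ℕ) [Nonempty V] : ¬ G.Winnable (nuD G π) := by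
  rintro ⟨E, hE, f, hf⟩
  -- choose v maximizing f, with π v minimal among maximizers
  have hM : (Finset.univ.filter (fun v => ∀ w, f w ≤ f v)).Nonempty := by
    obtain ⟨v, _, hv⟩ := Finset.exists_max_image Finset.univ f Finset.univ_nonempty
    exact ⟨v, Finset.mem_filter.2 ⟨Finset.mem_univ v, fun w => hv w (Finset.mem_univ w)⟩⟩
  obtain ⟨v, hvmem, hvmin⟩ := Finset.exists_min_image _ π hM
  have hvmax : ∀ w, f w ≤ f v := (Finset.mem_filter.1 hvmem).2
  -- termwise bound on the laplacian at v
  have hterm : ∀ w : V, (if π w < π v then (G.mult v w : ℤ) else 0) ≤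
      (G.mult v w : ℤ) * (f v - f w) := by
    intro w
    by_cases hw : π w < π v
    · have hne : f w ≠ f v := by
        intro he
        have hwM : w ∈ Finset.univ.filter (fun v => ∀ w, f w ≤ f v) :=
          Finset.mem_filter.2 ⟨Finset.mem_univ w, fun u => he ▸ hvmax u⟩
        have := hvmin w hwM
        omega
      have h1 : 1 ≤ f v - f w := by have := hvmax w; omega
      calc (if π w < π v then (G.mult v w : ℤ) else 0) = (G.mult v w : ℤ) * 1 := by
            simp [hw]
        _ ≤ (G.mult v w : ℤ) * (f v - f w) := by
            apply mul_le_mul_of_nonneg_left h1 (by positivity)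
    · simp only [hw, if_false]
      have h1 : f w ≤ f v := hvmax w
      exact mul_nonneg (by positivity) (by omega)
  have hlap : (∑ u ∈ Finset.univ.filter (fun u => π u < π v), (G.mult u v : ℤ)) ≤
      G.laplacian f v := by
    unfold laplacian
    calc ∑ u ∈ Finset.univ.filter (fun u => π u < π v), (G.mult u v : ℤ)
        = ∑ w, (if π w < π v then (G.mult v w : ℤ) else 0) := by
          rw [Finset.sum_filter]
          apply Finset.sum_congr rfl
          intro u _
          rw [G.symm u v]
      _ ≤ ∑ w, (G.mult v w : ℤ) * (f v - f w) := Finset.sum_le_sum (fun w _ => hterm w)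
  have hv' : G.laplacian f v = nuD G π v - E v := by rw [← hf]; simp
  have hEv := hE v
  unfold nuD at hv'
  omega

lemma sum_filter_lt_pi (π : V → ℕ) (hπ : Function.Injective π) :
    ∑ v, ∑ u ∈ Finset.univ.filter (fun u => π u < π v), (G.mult u v : ℤ) =
      (G.edgeCount : ℤ) := by
  set T := ∑ v, ∑ u ∈ Finset.univ.filter (fun u => π u < π v), (G.mult u v : ℤ) with hT
  have hswap : T = ∑ v, ∑ u, (if π v < π u then (G.mult u v : ℤ) else 0) := by
    calc T = ∑ v, ∑ u, (if π u < π v then (G.mult u v : ℤ) else 0) :=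
          Finset.sum_congr rfl (fun v _ => Finset.sum_filter _ _)
      _ = ∑ u, ∑ v, (if π u < π v then (G.mult u v : ℤ) else 0) := Finset.sum_comm
      _ = ∑ v, ∑ u, (if π v < π u then (G.mult u v : ℤ) else 0) := by
          apply Finset.sum_congr rfl; intro v _
          apply Finset.sum_congr rfl; intro u _
          rw [G.symm v u]
  have hfil : T = ∑ v, ∑ u, (if π u < π v then (G.mult u v : ℤ) else 0) :=
    Finset.sum_congr rfl (fun v _ => Finset.sum_filter _ _)
  have key : (∑ v, ∑ u, (if π u < π v then (G.mult u v : ℤ) else 0)) +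
      (∑ v, ∑ u, (if π v < π u then (G.mult u v : ℤ) else 0)) = ∑ v, (G.degree v : ℤ) := by
    rw [← Finset.sum_add_distrib]
    apply Finset.sum_congr rfl
    intro v _
    rw [← Finset.sum_add_distrib]
    unfold degree
    push_cast
    apply Finset.sum_congr rfl
    intro u _
    by_cases huv : u = v
    · subst huv
      simp [G.loopless u]
    · have hne : π u ≠ π v := fun h => huv (hπ h)
      rw [G.symm v u]
      rcases Nat.lt_or_ge (π u) (π v) with h1 | h1
      · rw [if_pos h1, if_neg (by omega)]; ring
      · have h2 : π v < π u := by omega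
        rw [if_neg (by omega), if_pos h2]; ring
  have hdouble : T + T = ∑ v, (G.degree v : ℤ) := by linarith [hfil, hswap, key]
  have heven : Even ((∑ v, G.degree v : ℕ) : ℤ) := by
    refine ⟨T, ?_⟩
    push_cast
    linarith [hdouble]
  have heven' : Even (∑ v, G.degree v) := Int.even_coe_nat _ |>.1 heven
  have hdiv : 2 * G.edgeCount = ∑ v, G.degree v := by
    unfold edgeCount
    exact Nat.two_mul_div_two_of_even heven'
  have hfin : ((2 * G.edgeCount : ℕ) : ℤ) = T + T := by
    rw [hdiv]
    push_cast
    linarith [hdouble]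
  push_cast at hfin
  omega

lemma nu_deg (π : V → ℕ) (hπ : Function.Injective π) :
    divDeg (nuD G π) = G.genus - 1 := by
  unfold divDeg nuD
  rw [Finset.sum_sub_distrib, sum_filter_lt_pi G π hπ]
  unfold genus
  simp [Finset.card_univ]

lemma K_sub_nu (π : V → ℕ) (hπ : Function.Injective π) :
    ∃ π' : V → ℕ, Function.Injective π' ∧ KD G - nuD G π = nuD G π' := by
  set N := Finset.univ.sup π with hN
  have hle : ∀ v : V, π v ≤ N := fun v => Finset.le_sup (Finset.mem_univ v)
  refine ⟨fun v => N - π v, ?_, ?_⟩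
  · intro u v h
    simp only at h
    have h1 := hle u
    have h2 := hle v
    exact hπ (by omega)
  · funext v
    have hfil : Finset.univ.filter (fun u => N - π u < N - π v) =
        Finset.univ.filter (fun u => π v < π u) := by
      apply Finset.filter_congr
      intro u _
      have h1 := hle u
      have h2 := hle v
      constructor <;> intro h <;> omega
    have hpart : (G.degree v : ℤ) =
        (∑ u ∈ Finset.univ.filter (fun u => π u < π v), (G.mult u v : ℤ)) +
        (∑ u ∈ Finset.univ.filter (fun u => π v < π u), (G.mult u v : ℤ)) := by
      unfold degree
      push_cast
      rw [Finset.sum_filter, Finset.sum_filter, ← Finset.sum_add_distrib]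
      apply Finset.sum_congr rfl
      intro u _
      by_cases huv : u = v
      · subst huv
        simp [G.loopless u]
      · have hne : π u ≠ π v := fun h => huv (hπ h)
        rw [G.symm v u]
        rcases Nat.lt_or_ge (π u) (π v) with h1 | h1
        · rw [if_pos h1, if_neg (by omega)]; ring
        · have h2 : π v < π u := by omega
          rw [if_neg (by omega), if_pos h2]; ring
    simp only [Pi.sub_apply, KD, nuD, hfil]
    omega

/-- rational laplacian -/
def lapQ (G : Multigraph V) (f : V → ℚ) : V → ℚ :=
  fun v => ∑ w, (G.mult v w : ℚ) * (f v - f w)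

lemma exists_qdominant (q : V) : ∃ c : V → ℤ, ∀ v, v ≠ q → G.laplacian c v ≤ -1 := by
  classical
  -- the subtype of vertices other than q
  set W := {v : V // v ≠ q}
  -- extension by zero
  let ext : (W → ℚ) → (V → ℚ) := fun x v => if h : v = q then 0 else x ⟨v, h⟩
  have ext_add : ∀ x y : W → ℚ, ext (x + y) = ext x + ext y := by
    intro x y; funext v; simp only [ext, Pi.add_apply]; split <;> simp
  have ext_smul : ∀ (a : ℚ) (x : W → ℚ), ext (a • x) = a • ext x := by
    intro a x; funext v; simp only [ext, Pi.smul_apply, smul_eq_mul]; split <;> simp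
  let L' : (W → ℚ) →ₗ[ℚ] (W → ℚ) :=
    { toFun := fun x w => lapQ G (ext x) w.1
      map_add' := by
        intro x y; funext w
        simp only [ext_add, lapQ, Pi.add_apply]
        rw [← Finset.sum_add_distrib]
        apply Finset.sum_congr rfl; intro u _; ring
      map_smul' := by
        intro a x; funext w
        simp only [ext_smul, lapQ, Pi.smul_apply, smul_eq_mul, RingHom.id_apply]
        rw [Finset.mul_sum]
        apply Finset.sum_congr rfl; intro u _; ring }
  have hinj : Function.Injective L' := by
    rw [injective_iff_map_eq_zero]
    intro x hx
    set f : V → ℚ := ext x with hf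
    have hfq : f q = 0 := by simp [hf, ext]
    have hlap0 : ∀ v : V, v ≠ q → lapQ G f v = 0 := by
      intro v hv
      have : L' x ⟨v, hv⟩ = 0 := by rw [hx]; rfl
      exact this
    have hsum0 : ∑ v, f v * lapQ G f v = 0 := by
      apply Finset.sum_eq_zero
      intro v _
      by_cases hv : v = q
      · rw [hv, hfq]; ring
      · rw [hlap0 v hv]; ring
    have hquad : ∑ v, ∑ w, (G.mult v w : ℚ) * (f v - f w) ^ 2 =
        2 * ∑ v, f v * lapQ G f v := by
      have e1 : ∑ v, f v * lapQ G f v =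
          ∑ v, ∑ w, (G.mult v w : ℚ) * (f v * (f v - f w)) := by
        apply Finset.sum_congr rfl
        intro v _
        unfold lapQ
        rw [Finset.mul_sum]
        apply Finset.sum_congr rfl
        intro w _; ring
      have e2 : ∑ v, ∑ w, (G.mult v w : ℚ) * (f w * (f w - f v)) =
          ∑ v, ∑ w, (G.mult v w : ℚ) * (f v * (f v - f w)) := by
        rw [Finset.sum_comm]
        apply Finset.sum_congr rfl
        intro v _
        apply Finset.sum_congr rfl
        intro w _
        rw [G.symm w v]
      calc ∑ v, ∑ w, (G.mult v w : ℚ) * (f v - f w) ^ 2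
          = ∑ v, ∑ w, ((G.mult v w : ℚ) * (f v * (f v - f w)) +
              (G.mult v w : ℚ) * (f w * (f w - f v))) := by
            apply Finset.sum_congr rfl; intro v _
            apply Finset.sum_congr rfl; intro w _; ring
        _ = (∑ v, ∑ w, (G.mult v w : ℚ) * (f v * (f v - f w))) +
            (∑ v, ∑ w, (G.mult v w : ℚ) * (f w * (f w - f v))) := by
            rw [← Finset.sum_add_distrib]
            apply Finset.sum_congr rfl; intro v _
            rw [← Finset.sum_add_distrib]
        _ = 2 * ∑ v, f v * lapQ G f v := by rw [e2, ← e1]; ring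
    have hzero : ∀ v w : V, (G.mult v w : ℚ) * (f v - f w) ^ 2 = 0 := by
      have hnn : ∀ v ∈ Finset.univ, (0:ℚ) ≤ ∑ w, (G.mult v w : ℚ) * (f v - f w) ^ 2 := by
        intro v _
        apply Finset.sum_nonneg
        intro w _
        positivity
      have h0 : ∑ v, ∑ w, (G.mult v w : ℚ) * (f v - f w) ^ 2 = 0 := by
        rw [hquad, hsum0]; ring
      intro v w
      have hv0 := (Finset.sum_eq_zero_iff_of_nonneg hnn).1 h0 v (Finset.mem_univ v)
      have hnn2 : ∀ w ∈ Finset.univ, (0:ℚ) ≤ (G.mult v w : ℚ) * (f v - f w) ^ 2 := by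
        intro w _; positivity
      exact (Finset.sum_eq_zero_iff_of_nonneg hnn2).1 hv0 w (Finset.mem_univ w)
    have hconst : ∀ v : V, f v = 0 := by
      intro v
      have hrel := G.connected q v
      induction hrel with
      | refl => exact hfq
      | tail _ hstep ih =>
          rename_i b c _
          have hz := hzero b c
          have hm : (0:ℚ) < (G.mult b c : ℚ) := by exact_mod_cast hstep
          have : (f b - f c) ^ 2 = 0 := by
            rcases mul_eq_zero.1 hz with h | h
            · exact absurd h (ne_of_gt hm)
            · exact h
          have := pow_eq_zero_iff (n := 2) (by norm_num) |>.1 this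
          have hfc : f c = f b := by linarith [sub_eq_zero.1 this]
          rw [hfc, ih]
    funext w
    have := hconst w.1
    simpa [hf, ext, w.2] using this
  have hsurj : Function.Surjective L' := (LinearMap.injective_iff_surjective).1 hinj
  obtain ⟨x, hx⟩ := hsurj (fun _ => -1)
  -- clear denominators
  set d : ℕ := ∏ w : W, (x w).den with hd
  have hdpos : 0 < d := Finset.prod_pos (fun w _ => (x w).pos)
  have hint : ∀ v : V, ∃ m : ℤ, (m : ℚ) = (d : ℚ) * ext x v := by
    intro v
    by_cases hv : v = q
    · exact ⟨0, by simp [ext, hv]⟩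
    · refine ⟨((d / (x ⟨v, hv⟩).den : ℕ) : ℤ) * (x ⟨v, hv⟩).num, ?_⟩
      have hdvd : (x ⟨v, hv⟩).den ∣ d := Finset.dvd_prod_of_mem _ (Finset.mem_univ _)
      have hden : ((x ⟨v, hv⟩).den : ℚ) ≠ 0 := by
        exact_mod_cast (x ⟨v, hv⟩).den_ne_zero
      have hdd : ((d / (x ⟨v, hv⟩).den * (x ⟨v, hv⟩).den : ℕ) : ℚ) = (d : ℚ) := by
        rw [Nat.div_mul_cancel hdvd]
      have hmd : x ⟨v, hv⟩ * ((x ⟨v, hv⟩).den : ℚ) = (x ⟨v, hv⟩).num :=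
        Rat.mul_den_eq_num _
      have hext : ext x v = x ⟨v, hv⟩ := by simp [ext, hv]
      rw [hext]
      push_cast at hdd ⊢
      calc ((d / (x ⟨v, hv⟩).den : ℕ) : ℚ) * ((x ⟨v, hv⟩).num : ℚ)
          = ((d / (x ⟨v, hv⟩).den : ℕ) : ℚ) * (x ⟨v, hv⟩ * ((x ⟨v, hv⟩).den : ℚ)) := by
            rw [hmd]
        _ = (((d / (x ⟨v, hv⟩).den : ℕ) : ℚ) * ((x ⟨v, hv⟩).den : ℚ)) * x ⟨v, hv⟩ := by
            ring
        _ = (d : ℚ) * x ⟨v, hv⟩ := by rw [hdd]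
  choose c hc using hint
  refine ⟨c, ?_⟩
  intro v hv
  have hcast : ((G.laplacian c v : ℤ) : ℚ) = (d : ℚ) * lapQ G (ext x) v := by
    unfold laplacian lapQ
    push_cast
    rw [Finset.mul_sum]
    apply Finset.sum_congr rfl
    intro w _
    rw [hc v, hc w]
    ring
  have hLv : lapQ G (ext x) v = -1 := by
    have : L' x ⟨v, hv⟩ = -1 := by rw [hx]
    exact this
  rw [hLv] at hcast
  have : ((G.laplacian c v : ℤ) : ℚ) ≤ -1 := by
    rw [hcast]
    have : (1:ℚ) ≤ (d:ℚ) := by exact_mod_cast hdpos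
    linarith
  exact_mod_cast this

def oneS (S : Finset V) : V → ℤ := fun v => if v ∈ S then 1 else 0

variable {G}

lemma lap_one_mem {S : Finset V} {v : V} (hv : v ∈ S) :
    G.laplacian (oneS S) v = ∑ w ∈ Finset.univ.filter (fun w => w ∉ S), (G.mult v w : ℤ) := by
  unfold laplacian oneS
  rw [Finset.sum_filter]
  apply Finset.sum_congr rfl
  intro w _
  rw [if_pos hv]
  by_cases hw : w ∈ S
  · simp [hw]
  · simp [hw]

lemma lap_one_notMem {S : Finset V} {v : V} (hv : v ∉ S) :
    G.laplacian (oneS S) v = -∑ w ∈ Finset.univ.filter (fun w => w ∈ S), (G.mult v w : ℤ) := by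
  unfold laplacian oneS
  rw [← Finset.sum_neg_distrib, Finset.sum_filter]
  apply Finset.sum_congr rfl
  intro w _
  rw [if_neg hv]
  by_cases hw : w ∈ S
  · simp [hw]
  · simp [hw]

lemma lap_selfadj (x y : V → ℤ) :
    ∑ v, (G.laplacian x v) * y v = ∑ v, x v * (G.laplacian y v) := by
  have e1 : ∑ v, (G.laplacian x v) * y v =
      ∑ v, ∑ w, ((G.mult v w : ℤ) * (x v * y v) - (G.mult v w : ℤ) * (x w * y v)) := by
    apply Finset.sum_congr rfl
    intro v _
    unfold laplacian
    rw [Finset.sum_mul]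
    apply Finset.sum_congr rfl
    intro w _; ring
  have e2 : ∑ v, x v * (G.laplacian y v) =
      ∑ v, ∑ w, ((G.mult v w : ℤ) * (x v * y v) - (G.mult v w : ℤ) * (x v * y w)) := by
    apply Finset.sum_congr rfl
    intro v _
    unfold laplacian
    rw [Finset.mul_sum]
    apply Finset.sum_congr rfl
    intro w _; ring
  have e3 : ∑ v, ∑ w, (G.mult v w : ℤ) * (x w * y v) =
      ∑ v, ∑ w, (G.mult v w : ℤ) * (x v * y w) := by
    rw [Finset.sum_comm]
    apply Finset.sum_congr rfl
    intro v _
    apply Finset.sum_congr rfl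
    intro w _
    rw [G.symm w v]
  rw [e1, e2]
  simp only [Finset.sum_sub_distrib]
  rw [e3]

lemma peel (D₁ : V → ℤ) (q : V)
    (hD : ∀ S : Finset V, S.Nonempty → q ∉ S →
      ∃ v ∈ S, D₁ v < ∑ w ∈ Finset.univ.filter (fun w => w ∉ S), (G.mult w v : ℤ)) :
    ∀ S : Finset V, q ∉ S → ∃ τ : V → ℕ, (∀ v ∈ S, 1 ≤ τ v) ∧ Set.InjOn τ ↑S ∧
      ∀ v ∈ S, D₁ v <
        ∑ w ∈ Finset.univ.filter (fun w => w ∉ S ∨ (w ∈ S ∧ τ w < τ v)), (G.mult w v : ℤ) := by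
  intro S
  induction S using Finset.strongInduction with
  | _ S ih =>
    intro hq
    rcases Finset.eq_empty_or_nonempty S with hS | hS
    · subst hS
      exact ⟨fun _ => 1, by simp, by simp, by simp⟩
    obtain ⟨v₀, hv₀S, hv₀⟩ := hD S hS hq
    have hssub : S.erase v₀ ⊂ S := Finset.erase_ssubset hv₀S
    have hq' : q ∉ S.erase v₀ := fun h => hq (Finset.mem_of_mem_erase h)
    obtain ⟨τ', h1', hinj', h3'⟩ := ih (S.erase v₀) hssub hq'
    refine ⟨fun v => if v = v₀ then 1 else τ' v + 1, ?_, ?_, ?_⟩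
    · intro v hv
      by_cases h : v = v₀ <;> simp [h]
    · intro u hu v hv huv
      simp only at huv
      by_cases h1 : u = v₀ <;> by_cases h2 : v = v₀
      · rw [h1, h2]
      · rw [if_pos h1, if_neg h2] at huv
        have : v ∈ S.erase v₀ := Finset.mem_erase.2 ⟨h2, hv⟩
        have := h1' v this
        omega
      · rw [if_neg h1, if_pos h2] at huv
        have : u ∈ S.erase v₀ := Finset.mem_erase.2 ⟨h1, hu⟩
        have := h1' u this
        omega
      · rw [if_neg h1, if_neg h2] at huv
        exact hinj' (Finset.mem_coe.2 (Finset.mem_erase.2 ⟨h1, hu⟩))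
          (Finset.mem_coe.2 (Finset.mem_erase.2 ⟨h2, hv⟩)) (by omega)
    · intro v hv
      by_cases h : v = v₀
      · subst h
        refine lt_of_lt_of_le hv₀ ?_
        apply Finset.sum_le_sum_of_subset_of_nonneg
        · intro w hw
          simp only [Finset.mem_filter, Finset.mem_univ, true_and] at hw ⊢
          exact Or.inl hw
        · intro w _ _; positivity
      · have hv' : v ∈ S.erase v₀ := Finset.mem_erase.2 ⟨h, hv⟩
        refine lt_of_lt_of_le (h3' v hv') ?_
        apply Finset.sum_le_sum_of_subset_of_nonneg
        · intro w hw
          simp only [Finset.mem_filter, Finset.mem_univ, true_and] at hw ⊢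
          rw [if_neg h]
          rcases hw with hw | ⟨hwS, hwlt⟩
          · by_cases hwv : w ∈ S
            · have hwv0 : w = v₀ := by
                by_contra hc
                exact hw (Finset.mem_erase.2 ⟨hc, hwv⟩)
              subst hwv0
              refine Or.inr ⟨hwv, ?_⟩
              rw [if_pos rfl]
              have := h1' v hv'
              omega
            · exact Or.inl hwv
          · have hwS' : w ∈ S := Finset.mem_of_mem_erase hwS
            have hwne : w ≠ v₀ := (Finset.mem_erase.1 hwS).1
            refine Or.inr ⟨hwS', ?_⟩
            rw [if_neg hwne]
            omega
        · intro w _ _; positivity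

variable (G)

theorem dichotomy [Nonempty V] (D : V → ℤ) :
    G.Winnable D ∨ ∃ π : V → ℕ, Function.Injective π ∧
      ∃ D' : V → ℤ, G.Principal (D - D') ∧ ∀ v, D' v ≤ nuD G π v := by
  classical
  obtain ⟨q⟩ := (inferInstance : Nonempty V)
  obtain ⟨c, hc⟩ := exists_qdominant G q
  set Good : (V → ℤ) → Prop := fun D' => G.Principal (D - D') ∧ ∀ v, v ≠ q → 0 ≤ D' v with hGood
  -- Good is nonempty
  have hGoodNE : ∃ D', Good D' := by
    set M : ℤ := Finset.univ.sup' Finset.univ_nonempty (fun v => max 0 (-(D v))) with hM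
    have hM0 : 0 ≤ M := le_trans (le_max_left 0 (-(D q)))
      (Finset.le_sup' (fun v => max 0 (-(D v))) (Finset.mem_univ q))
    refine ⟨D - G.laplacian (M • c), ⟨M • c, by ring⟩, ?_⟩
    intro v hv
    have h1 : G.laplacian (M • c) v = M * G.laplacian c v := by
      have := lap_smul G M c
      have := congrFun this v
      simpa using this
    have h2 : M * G.laplacian c v ≤ M * (-1) := by
      apply mul_le_mul_of_nonneg_left (hc v hv) hM0
    have h3 : -(D v) ≤ M := le_trans (le_max_right 0 (-(D v)))
      (Finset.le_sup' (fun v => max 0 (-(D v))) (Finset.mem_univ v))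
    simp only [Pi.sub_apply]
    omega
  -- degree is preserved
  have hdeg : ∀ D', Good D' → divDeg D' = divDeg D := by
    intro D' hD'
    exact (divDeg_eq_of_principal_sub G hD'.1).symm
  have hsplit : ∀ D' : V → ℤ, divDeg D' = D' q + ∑ v ∈ Finset.univ.erase q, D' v := by
    intro D'
    unfold divDeg
    rw [← Finset.add_sum_erase _ _ (Finset.mem_univ q)]
  -- maximize D' q
  have hP1 : ∃ a : ℤ, (∃ D', Good D' ∧ D' q = a) ∧
      ∀ z : ℤ, (∃ D', Good D' ∧ D' q = z) → z ≤ a := by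
    refine Int.exists_greatest_of_bdd ⟨divDeg D, ?_⟩ ?_
    · rintro z ⟨D', hD', rfl⟩
      have h1 := hdeg D' hD'
      have h2 : 0 ≤ ∑ v ∈ Finset.univ.erase q, D' v :=
        Finset.sum_nonneg (fun v hv => hD'.2 v (Finset.mem_erase.1 hv).1)
      have := hsplit D'
      omega
    · obtain ⟨D', hD'⟩ := hGoodNE
      exact ⟨D' q, D', hD', rfl⟩
  obtain ⟨a, ⟨D₀', hD₀', hD₀'q⟩, hamax⟩ := hP1
  -- among Good with D' q = a, maximize Ψ
  have hP2 : ∃ z : ℤ, (∃ D', (Good D' ∧ D' q = a) ∧ (∑ v ∈ Finset.univ.erase q, D' v * c v) = z) ∧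
      ∀ z' : ℤ, (∃ D', (Good D' ∧ D' q = a) ∧ (∑ v ∈ Finset.univ.erase q, D' v * c v) = z') → z' ≤ z := by
    refine Int.exists_greatest_of_bdd ⟨∑ v ∈ Finset.univ.erase q, (divDeg D - a) * |c v|, ?_⟩ ?_
    · rintro z ⟨D', ⟨hD', hq'⟩, rfl⟩
      apply Finset.sum_le_sum
      intro v hv
      have hv' : v ≠ q := (Finset.mem_erase.1 hv).1
      have h0 : 0 ≤ D' v := hD'.2 v hv'
      have hC : D' v ≤ divDeg D - a := by
        have h1 := hdeg D' hD'
        have h2 := hsplit D'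
        have h3 : D' v ≤ ∑ w ∈ Finset.univ.erase q, D' w := by
          apply Finset.single_le_sum (fun w hw => hD'.2 w (Finset.mem_erase.1 hw).1) hv
        omega
      rcases le_or_gt 0 (c v) with hcv | hcv
      · calc D' v * c v ≤ (divDeg D - a) * c v := mul_le_mul_of_nonneg_right hC hcv
          _ ≤ (divDeg D - a) * |c v| := by
            apply mul_le_mul_of_nonneg_left (le_abs_self _) (by omega)
      · have h4 : D' v * c v ≤ 0 := mul_nonpos_of_nonneg_of_nonpos h0 (by omega)
        have h5 : 0 ≤ (divDeg D - a) * |c v| := mul_nonneg (by omega) (abs_nonneg _)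
        omega
    · exact ⟨∑ v ∈ Finset.univ.erase q, D₀' v * c v, ⟨D₀', ⟨hD₀', hD₀'q⟩, rfl⟩⟩
  obtain ⟨z, ⟨D₁, ⟨hD₁, hD₁q⟩, hD₁z⟩, hzmax⟩ := hP2
  by_cases ha : 0 ≤ a
  · -- D₁ is effective, so D is winnable
    left
    apply winnable_of_principal_sub G hD₁.1
    apply winnable_of_effective
    intro v
    by_cases hv : v = q
    · rw [hv, hD₁q]; exact ha
    · exact hD₁.2 v hv
  · right
    -- Dhar property
    have hDhar : ∀ S : Finset V, S.Nonempty → q ∉ S →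
        ∃ v ∈ S, D₁ v < ∑ w ∈ Finset.univ.filter (fun w => w ∉ S), (G.mult w v : ℤ) := by
      intro S hS hqS
      by_contra hcon
      push_neg at hcon
      have hviol : ∀ v ∈ S, ∑ w ∈ Finset.univ.filter (fun w => w ∉ S), (G.mult v w : ℤ) ≤ D₁ v := by
        intro v hv
        refine le_trans (le_of_eq ?_) (hcon v hv)
        apply Finset.sum_congr rfl
        intro w _
        rw [G.symm v w]
      set D₂ : V → ℤ := D₁ - G.laplacian (oneS S) with hD₂
      have hD₂good : Good D₂ := by
        constructor
        · have : D - D₂ = (D - D₁) + G.laplacian (oneS S) := by rw [hD₂]; ring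
          rw [this]
          exact principal_add G hD₁.1 ⟨oneS S, rfl⟩
        · intro v hv
          by_cases hvS : v ∈ S
          · have : G.laplacian (oneS S) v = ∑ w ∈ Finset.univ.filter (fun w => w ∉ S), (G.mult v w : ℤ) :=
              lap_one_mem hvS
            simp only [hD₂, Pi.sub_apply, this]
            have := hviol v hvS
            omega
          · have hl : G.laplacian (oneS S) v = -∑ w ∈ Finset.univ.filter (fun w => w ∈ S), (G.mult v w : ℤ) :=
              lap_one_notMem hvS
            have hnn : 0 ≤ ∑ w ∈ Finset.univ.filter (fun w => w ∈ S), (G.mult v w : ℤ) := by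
              apply Finset.sum_nonneg; intro w _; positivity
            have := hD₁.2 v hv
            simp only [hD₂, Pi.sub_apply, hl]
            omega
      -- q gets no new chips: edges from q to S are zero
      have hlapq : G.laplacian (oneS S) q = -∑ w ∈ Finset.univ.filter (fun w => w ∈ S), (G.mult q w : ℤ) :=
        lap_one_notMem hqS
      have hqS0 : ∑ w ∈ Finset.univ.filter (fun w => w ∈ S), (G.mult q w : ℤ) = 0 := by
        have h1 : D₂ q ≤ a := hamax _ ⟨D₂, hD₂good, rfl⟩
        have h2 : D₂ q = D₁ q + ∑ w ∈ Finset.univ.filter (fun w => w ∈ S), (G.mult q w : ℤ) := by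
          simp only [hD₂, Pi.sub_apply, hlapq]; ring
        have hnn : 0 ≤ ∑ w ∈ Finset.univ.filter (fun w => w ∈ S), (G.mult q w : ℤ) := by
          apply Finset.sum_nonneg; intro w _; positivity
        omega
      have hD₂q : D₂ q = a := by
        simp only [hD₂, Pi.sub_apply, hlapq, hqS0, hD₁q]; ring
      -- Ψ strictly increases
      have hX : ∑ v ∈ Finset.univ.erase q, (G.laplacian (oneS S) v) * c v ≤ -1 := by
        have h1 : ∑ v, (G.laplacian (oneS S) v) * c v = ∑ v, oneS S v * G.laplacian c v :=
          lap_selfadj _ _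
        have h2 : ∑ v, oneS S v * G.laplacian c v = ∑ v ∈ S, G.laplacian c v := by
          unfold oneS
          simp only [ite_mul, one_mul, zero_mul]
          rw [Finset.sum_ite_mem, Finset.univ_inter]
        have h3 : ∑ v ∈ S, G.laplacian c v ≤ -1 := by
          have hcard : 1 ≤ S.card := Finset.Nonempty.card_pos hS
          calc ∑ v ∈ S, G.laplacian c v ≤ ∑ _v ∈ S, (-1 : ℤ) := by
                apply Finset.sum_le_sum
                intro v hv
                exact hc v (fun h => hqS (h ▸ hv))
            _ = -(S.card : ℤ) := by rw [Finset.sum_const]; simp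
            _ ≤ -1 := by omega
        have h4 : ∑ v, (G.laplacian (oneS S) v) * c v =
            (G.laplacian (oneS S) q) * c q +
            ∑ v ∈ Finset.univ.erase q, (G.laplacian (oneS S) v) * c v := by
          rw [← Finset.add_sum_erase _ _ (Finset.mem_univ q)]
        have h5 : (G.laplacian (oneS S) q) * c q = 0 := by
          rw [hlapq, hqS0]; ring
        omega
      have hpsi2 : ∑ v ∈ Finset.univ.erase q, D₂ v * c v =
          (∑ v ∈ Finset.univ.erase q, D₁ v * c v) -
          ∑ v ∈ Finset.univ.erase q, (G.laplacian (oneS S) v) * c v := by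
        rw [← Finset.sum_sub_distrib]
        apply Finset.sum_congr rfl
        intro v _
        simp only [hD₂, Pi.sub_apply]
        ring
      have hle : ∑ v ∈ Finset.univ.erase q, D₂ v * c v ≤ z :=
        hzmax _ ⟨D₂, ⟨hD₂good, hD₂q⟩, rfl⟩
      omega
    -- peel off an ordering
    obtain ⟨τ, hτ1, hτinj, hτ3⟩ := peel D₁ q hDhar (Finset.univ.erase q)
      (fun h => (Finset.mem_erase.1 h).1 rfl)
    set π : V → ℕ := fun v => if v = q then 0 else τ v with hπ
    have hπq : π q = 0 := by simp [hπ]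
    have hπne : ∀ v, v ≠ q → π v = τ v := by intro v hv; simp [hπ, hv]
    have hmem : ∀ v, v ≠ q → v ∈ Finset.univ.erase q := fun v hv =>
      Finset.mem_erase.2 ⟨hv, Finset.mem_univ v⟩
    have hτpos : ∀ v, v ≠ q → 1 ≤ τ v := fun v hv => hτ1 v (hmem v hv)
    refine ⟨π, ?_, D₁, hD₁.1, ?_⟩
    · intro u v huv
      by_cases hu : u = q <;> by_cases hv : v = q
      · rw [hu, hv]
      · rw [hu, hπq, hπne v hv] at huv
        have := hτpos v hv
        omega
      · rw [hv, hπq, hπne u hu] at huv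
        have := hτpos u hu
        omega
      · rw [hπne u hu, hπne v hv] at huv
        exact hτinj (Finset.mem_coe.2 (hmem u hu)) (Finset.mem_coe.2 (hmem v hv)) huv
    · intro v
      by_cases hv : v = q
      · subst hv
        have hfil : Finset.univ.filter (fun u => π u < π v) = ∅ := by
          apply Finset.filter_eq_empty_iff.2
          intro u _
          rw [hπq]
          omega
        unfold nuD
        rw [hfil]
        simp only [Finset.sum_empty]
        omega
      · have hlt := hτ3 v (hmem v hv)
        have hsub : Finset.univ.filter
            (fun w => w ∉ Finset.univ.erase q ∨ (w ∈ Finset.univ.erase q ∧ τ w < τ v)) ⊆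
            Finset.univ.filter (fun w => π w < π v) := by
          intro w hw
          simp only [Finset.mem_filter, Finset.mem_univ, true_and] at hw ⊢
          rw [hπne v hv]
          rcases hw with hw | ⟨hw, hwlt⟩
          · have hwq : w = q := by
              by_contra hcw
              exact hw (hmem w hcw)
            rw [hwq, hπq]
            exact hτpos v hv
          · rw [hπne w (Finset.mem_erase.1 hw).1]
            exact hwlt
        have hle : ∑ w ∈ Finset.univ.filter
            (fun w => w ∉ Finset.univ.erase q ∨ (w ∈ Finset.univ.erase q ∧ τ w < τ v)), (G.mult w v : ℤ) ≤
            ∑ w ∈ Finset.univ.filter (fun w => π w < π v), (G.mult w v : ℤ) := by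
          apply Finset.sum_le_sum_of_subset_of_nonneg hsub
          intro w _ _
          positivity
        unfold nuD
        omega

lemma divDeg_mul_delta (a : ℤ) (v₀ : V) : divDeg (fun w => a * delta v₀ w) = a := by
  unfold divDeg
  rw [← Finset.mul_sum]
  have : ∑ w, delta v₀ w = 1 := divDeg_delta v₀
  rw [this, mul_one]

variable {G}

/-- the set whose sup (together with -1) is the rank -/
def Sset (G : Multigraph V) (D : V → ℤ) : Set ℤ :=
  {k : ℤ | 0 ≤ k ∧ ∀ E : V → ℤ, Effective E → divDeg E = k → G.Winnable (D - E)}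

lemma rank_eq_sSup (D : V → ℤ) : G.rank D = sSup (insert (-1) (Sset G D)) := rfl

lemma mem_S_le_deg [Nonempty V] {D : V → ℤ} {k : ℤ} (hk : k ∈ Sset G D) : k ≤ divDeg D := by
  obtain ⟨v₀⟩ := (inferInstance : Nonempty V)
  obtain ⟨hk0, hkw⟩ := hk
  have hE : Effective (fun w => k * delta v₀ w) := by
    intro w
    dsimp only [delta]
    split <;> simp [hk0]
  have hw := hkw _ hE (divDeg_mul_delta k v₀)
  have := winnable_deg_nonneg G hw
  rw [divDeg_sub, divDeg_mul_delta] at this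
  omega

lemma S_dcl [Nonempty V] {D : V → ℤ} {k j : ℤ} (hk : k ∈ Sset G D) (hj0 : 0 ≤ j)
    (hjk : j ≤ k) : j ∈ Sset G D := by
  obtain ⟨v₀⟩ := (inferInstance : Nonempty V)
  obtain ⟨hk0, hkw⟩ := hk
  refine ⟨hj0, ?_⟩
  intro E hE hdeg
  have hE' : Effective (fun w => E w + (k - j) * delta v₀ w) := by
    intro w
    have h1 := hE w
    dsimp only [delta]
    split <;> simp <;> omega
  have hdeg' : divDeg (fun w => E w + (k - j) * delta v₀ w) = k := by
    have := divDeg_add E (fun w => (k - j) * delta v₀ w)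
    have h2 := divDeg_mul_delta (k - j) v₀
    have h3 : (fun w => E w + (k - j) * delta v₀ w) = E + (fun w => (k - j) * delta v₀ w) := rfl
    rw [h3, this, h2, hdeg]
    ring
  have hw := hkw _ hE' hdeg'
  have heq : D - E = (D - (fun w => E w + (k - j) * delta v₀ w)) + (fun w => (k - j) * delta v₀ w) := by
    funext w
    simp only [Pi.sub_apply, Pi.add_apply]
    ring
  rw [heq]
  apply winnable_add_effective G hw
  intro w
  dsimp only [delta]
  split <;> simp <;> omega

lemma rank_eq_one' [Nonempty V] {D : V → ℤ} (h1 : (1:ℤ) ∈ Sset G D) (h2 : (2:ℤ) ∉ Sset G D) :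
    G.rank D = 1 := by
  rw [rank_eq_sSup]
  have hub : ∀ x ∈ insert (-1 : ℤ) (Sset G D), x ≤ 1 := by
    intro x hx
    rcases Set.mem_insert_iff.1 hx with hx | hx
    · omega
    · by_contra hc
      push_neg at hc
      exact h2 (S_dcl hx (by omega) (by omega))
  apply le_antisymm
  · exact csSup_le (Set.insert_nonempty _ _) hub
  · exact le_csSup ⟨1, hub⟩ (Set.mem_insert_iff.2 (Or.inr h1))

lemma one_mem_S [Nonempty V] {D : V → ℤ} (h1 : ∀ v, G.Winnable (D - delta v)) :
    (1:ℤ) ∈ Sset G D := by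
  refine ⟨by omega, ?_⟩
  intro E hE hdeg
  obtain ⟨v, rfl⟩ := effective_degOne hE hdeg
  exact h1 v

lemma exists_rank_one [Nonempty V] (D₀ : V → ℤ) (h1 : ∀ v, G.Winnable (D₀ - delta v)) :
    ∃ D : V → ℤ, G.rank D = 1 ∧ divDeg D ≤ divDeg D₀ := by
  obtain ⟨v₀⟩ := (inferInstance : Nonempty V)
  suffices H : ∀ n : ℕ, ∀ D₀ : V → ℤ, divDeg D₀ ≤ n → (∀ v, G.Winnable (D₀ - delta v)) →
      ∃ D : V → ℤ, G.rank D = 1 ∧ divDeg D ≤ divDeg D₀ by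
    apply H (divDeg D₀).toNat D₀ _ h1
    exact Int.self_le_toNat _
  intro n
  induction n with
  | zero =>
      intro D₀ hdeg h1
      have hone := one_mem_S h1
      have := mem_S_le_deg hone
      omega
  | succ n ih =>
      intro D₀ hdeg h1
      have hone := one_mem_S h1
      by_cases h2 : (2:ℤ) ∈ Sset G D₀
      · have hd2 : 2 ≤ divDeg D₀ := mem_S_le_deg h2
        set D₁ : V → ℤ := D₀ - delta v₀ with hD₁
        have h1' : ∀ v, G.Winnable (D₁ - delta v) := by
          intro v
          have heq : D₁ - delta v = D₀ - (delta v₀ + delta v) := by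
            rw [hD₁]; ring
          rw [heq]
          apply h2.2
          · intro w
            simp only [Pi.add_apply]
            have := delta_nonneg v₀ w
            have := delta_nonneg v w
            omega
          · rw [divDeg_add, divDeg_delta, divDeg_delta]; norm_num
        have hdeg₁ : divDeg D₁ = divDeg D₀ - 1 := by
          rw [hD₁, divDeg_sub, divDeg_delta]
        obtain ⟨D, hD, hDdeg⟩ := ih D₁ (by omega) h1'
        exact ⟨D, hD, by omega⟩
      · exact ⟨D₀, rank_eq_one' hone h2, le_refl _⟩

lemma sum_degree_eq : (∑ v, (G.degree v : ℤ)) = 2 * (G.edgeCount : ℤ) := by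
  classical
  set π : V → ℕ := fun v => ((Fintype.equivFin V) v : ℕ) with hπdef
  have hπ : Function.Injective π := by
    intro u v h
    exact (Fintype.equivFin V).injective (Fin.ext h)
  have hT := sum_filter_lt_pi G π hπ
  have hfil : ∀ (p : V → V → Prop) [∀ v u, Decidable (p v u)], True := fun _ _ => trivial
  -- recompute the double count
  have key : (∑ v, ∑ u, (if π u < π v then (G.mult u v : ℤ) else 0)) +
      (∑ v, ∑ u, (if π v < π u then (G.mult u v : ℤ) else 0)) = ∑ v, (G.degree v : ℤ) := by
    rw [← Finset.sum_add_distrib]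
    apply Finset.sum_congr rfl
    intro v _
    rw [← Finset.sum_add_distrib]
    unfold degree
    push_cast
    apply Finset.sum_congr rfl
    intro u _
    by_cases huv : u = v
    · subst huv
      simp [G.loopless u]
    · have hne : π u ≠ π v := fun h => huv (hπ h)
      rw [G.symm v u]
      rcases Nat.lt_or_ge (π u) (π v) with h1 | h1
      · rw [if_pos h1, if_neg (by omega)]; ring
      · have h2 : π v < π u := by omega
        rw [if_neg (by omega), if_pos h2]; ring
  have hfil1 : ∑ v, ∑ u ∈ Finset.univ.filter (fun u => π u < π v), (G.mult u v : ℤ) =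
      ∑ v, ∑ u, (if π u < π v then (G.mult u v : ℤ) else 0) :=
    Finset.sum_congr rfl (fun v _ => Finset.sum_filter _ _)
  have hswap : ∑ v, ∑ u ∈ Finset.univ.filter (fun u => π u < π v), (G.mult u v : ℤ) =
      ∑ v, ∑ u, (if π v < π u then (G.mult u v : ℤ) else 0) := by
    calc ∑ v, ∑ u ∈ Finset.univ.filter (fun u => π u < π v), (G.mult u v : ℤ)
        = ∑ v, ∑ u, (if π u < π v then (G.mult u v : ℤ) else 0) := hfil1
      _ = ∑ u, ∑ v, (if π u < π v then (G.mult u v : ℤ) else 0) := Finset.sum_comm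
      _ = ∑ v, ∑ u, (if π v < π u then (G.mult u v : ℤ) else 0) := by
          apply Finset.sum_congr rfl; intro v _
          apply Finset.sum_congr rfl; intro u _
          rw [G.symm v u]
  omega

lemma KD_deg : divDeg (KD G) = 2 * G.genus - 2 := by
  unfold divDeg KD
  rw [Finset.sum_sub_distrib]
  have h1 := sum_degree_eq (G := G)
  have h2 : ∑ _v : V, (2:ℤ) = 2 * (Fintype.card V : ℤ) := by
    rw [Finset.sum_const]
    simp [Finset.card_univ]
    ring
  unfold genus
  omega

lemma case_low [Nonempty V] (hg : G.genus ≤ 1) :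
    ∃ D₀ : V → ℤ, (∀ v, G.Winnable (D₀ - delta v)) ∧ divDeg D₀ = G.genus + 1 := by
  obtain ⟨v₀⟩ := (inferInstance : Nonempty V)
  refine ⟨fun w => (G.genus + 1) * delta v₀ w, ?_, divDeg_mul_delta _ _⟩
  intro v
  rcases dichotomy G ((fun w => (G.genus + 1) * delta v₀ w) - delta v) with hw | ⟨π, hπ, D', hP, hle⟩
  · exact hw
  exfalso
  have h1 := divDeg_eq_of_principal_sub G hP
  have h2 : divDeg ((fun w => (G.genus + 1) * delta v₀ w) - delta v) = G.genus := by
    rw [divDeg_sub, divDeg_mul_delta, divDeg_delta]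
    ring
  have h3 : divDeg D' ≤ divDeg (nuD G π) := divDeg_mono hle
  have h4 := nu_deg G π hπ
  omega

lemma case_high [Nonempty V] (hg : 2 ≤ G.genus) :
    ∃ D₀ : V → ℤ, (∀ v, G.Winnable (D₀ - delta v)) ∧ divDeg D₀ = G.genus := by
  obtain ⟨v₀⟩ := (inferInstance : Nonempty V)
  have hKB : (fun w => KD G w - (G.genus - 2) * delta v₀ w) =
      KD G - (fun w => (G.genus - 2) * delta v₀ w) := rfl
  have hdeg₀ : divDeg (fun w => KD G w - (G.genus - 2) * delta v₀ w) = G.genus := by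
    rw [hKB, divDeg_sub, KD_deg, divDeg_mul_delta]
    ring
  refine ⟨fun w => KD G w - (G.genus - 2) * delta v₀ w, ?_, hdeg₀⟩
  intro v
  rcases dichotomy G ((fun w => KD G w - (G.genus - 2) * delta v₀ w) - delta v)
    with hw | ⟨π, hπ, D', hP, hle⟩
  · exact hw
  exfalso
  obtain ⟨π', hπ', hKnu⟩ := K_sub_nu G π hπ
  have hdegD' : divDeg D' = G.genus - 1 := by
    have h1 := divDeg_eq_of_principal_sub G hP
    have h2 : divDeg ((fun w => KD G w - (G.genus - 2) * delta v₀ w) - delta v) = G.genus - 1 := by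
      rw [divDeg_sub, hdeg₀, divDeg_delta]
    omega
  have hE₁ : D' = nuD G π := by
    have hdnu := nu_deg G π hπ
    have heff : Effective (fun w => nuD G π w - D' w) := by
      intro w
      have := hle w
      simp only
      omega
    have hdeg0 : divDeg (fun w => nuD G π w - D' w) = 0 := by
      have : (fun w => nuD G π w - D' w) = nuD G π - D' := rfl
      rw [this, divDeg_sub]
      omega
    have hzero := effective_degZero_eq_zero heff hdeg0
    funext w
    have := congrFun hzero w
    simp only [Pi.zero_apply] at this
    omega
  apply nu_unwinnable G π'
  refine ⟨fun w => (G.genus - 2) * delta v₀ w + delta v w, ?_, ?_⟩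
  · intro w
    have h1 := delta_nonneg v₀ w
    have h2 := delta_nonneg v w
    simp only
    have : 0 ≤ (G.genus - 2) * delta v₀ w := mul_nonneg (by omega) h1
    omega
  · obtain ⟨f, hf⟩ := hP
    refine ⟨f, ?_⟩
    funext w
    have h := congrFun hKnu w
    have h2 := congrFun hf w
    simp only [Pi.sub_apply] at h h2 ⊢
    rw [hE₁] at h2
    linarith [h, h2]

end GonAux

/-- Every graph of genus g ≤ 3 admits a divisor D with r(D) = 1 and
deg(D) ≤ ⌊(g+3)/2⌋; i.e., its gonality is at most ⌊(g+3)/2⌋.  (Note that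
for r = 1 and d = ⌊(g+3)/2⌋ the Brill-Noether number g - (r+1)(g-d+r)
is automatically nonnegative.) -/
theorem gonality_conjecture_low_genus {V : Type} [Fintype V] [DecidableEq V] [Nonempty V]
    (G : Multigraph V) (hg : G.genus ≤ 3) :
    ∃ D : V → ℤ, G.rank D = 1 ∧ divDeg D ≤ (G.genus + 3) / 2 := by
  classical
  rcases le_or_gt G.genus 1 with hg1 | hg2
  · obtain ⟨D₀, h1, hdeg⟩ := GonAux.case_low (G := G) hg1
    obtain ⟨D, hD, hDdeg⟩ := GonAux.exists_rank_one D₀ h1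
    exact ⟨D, hD, by omega⟩
  · obtain ⟨D₀, h1, hdeg⟩ := GonAux.case_high (G := G) (by omega)
    obtain ⟨D, hD, hDdeg⟩ := GonAux.exists_rank_one D₀ h1
    exact ⟨D, hD, by omega⟩
end

section
/- Let G = B_n be the banana graph consisting of two vertices Q₁, Q₂ joined by n ≥ 3 parallel edges, of genus g = n-1. Then r((g-1)(Q₂) - (Q₁)) = -1, i.e., the divisor (g-1)(Q₂) - (Q₁) is not linearly equivalent to any effective divisor. Consequently, neither Q₁ nor Q₂ is a Weierstrass point of B_n, so B_n has no Weierstrass points. -/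
open Finset

/-- The banana graph B_n: two vertices joined by n parallel edges. -/
def bananaGraph (n : ℕ) (hn : 0 < n) : Multigraph Bool where
  mult := fun u v => if u = v then 0 else n
  symm := by
    intro u v
    rcases eq_or_ne u v with rfl | h
    · rfl
    · simp only [if_neg h, if_neg (Ne.symm h)]
  loopless := by intro v; simp
  connected := by
    intro u v
    rcases eq_or_ne u v with rfl | h
    · exact Relation.ReflTransGen.refl
    · exact Relation.ReflTransGen.single (by simpa [h] using hn)

lemma banana_mul_ge (n : ℕ) (hn : 1 ≤ n) (m : ℤ) (h : 1 ≤ (n:ℤ)*m) : (n:ℤ) ≤ n*m := by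
  rcases le_or_gt m 0 with hm | hm
  · have := mul_nonpos_of_nonneg_of_nonpos (by positivity : (0:ℤ) ≤ n) hm
    omega
  · have : (n:ℤ)*1 ≤ n*m := mul_le_mul_of_nonneg_left hm (by positivity)
    simpa using this

lemma banana_mul_le (n : ℕ) (hn : 1 ≤ n) (m : ℤ) (h : (n:ℤ)*m ≤ -1) : (n:ℤ)*m ≤ -n := by
  have h' : 1 ≤ (n:ℤ)*(-m) := by linarith [mul_neg (n:ℤ) m]
  have := banana_mul_ge n hn (-m) h'
  have hneg : (n:ℤ)*(-m) = -(n*m) := by ring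
  omega

lemma banana_laplacian (n : ℕ) (hn : 0 < n) (f : Bool → ℤ) :
    (bananaGraph n hn).laplacian f =
      fun v => if v then (n:ℤ) * (f true - f false) else (n:ℤ) * (f false - f true) := by
  funext v
  cases v <;> simp [Multigraph.laplacian, bananaGraph, Fintype.sum_bool]

lemma banana_not_winnable (n : ℕ) (hn : 0 < n) (D : Bool → ℤ)
    (hD : ∀ m : ℤ, ¬(0 ≤ D false + (n:ℤ)*m ∧ 0 ≤ D true - (n:ℤ)*m)) :
    ¬ (bananaGraph n hn).Winnable D := by
  rintro ⟨E, hE, f, hf⟩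
  rw [banana_laplacian n hn f] at hf
  refine hD (f true - f false) ⟨?_, ?_⟩
  · have h0 := hE false
    have := congrFun hf false
    simp at this
    have hEf : E false = D false - (n:ℤ) * (f false - f true) := by omega
    have : (n:ℤ) * (f false - f true) = -((n:ℤ) * (f true - f false)) := by ring
    omega
  · have h1 := hE true
    have := congrFun hf true
    simp at this
    omega

/-- On the banana graph B_n (n ≥ 3) of genus g = n - 1, with Q₁ = false and
Q₂ = true, the divisor (g-1)(Q₂) - (Q₁) has rank -1 (it is not equivalent to
any effective divisor); consequently neither vertex is a Weierstrass point,
i.e., B_n has no Weierstrass points. -/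
theorem banana_no_weierstrass (n : ℕ) (hn : 3 ≤ n) :
    (bananaGraph n (by omega)).rank (fun v => if v then (n : ℤ) - 2 else -1) = -1 ∧
    ∀ v : Bool,
      (bananaGraph n (by omega)).rank (fun w => if w = v then (n : ℤ) - 1 else 0) < 1 := by
  have hn0 : 0 < n := by omega
  constructor
  · -- the set is empty
    have hS : {k : ℤ | 0 ≤ k ∧ ∀ E : Bool → ℤ, Effective E → divDeg E = k →
        (bananaGraph n (by omega : 0 < n)).Winnable
          ((fun v => if v then (n : ℤ) - 2 else -1) - E)} = ∅ := by
      ext k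
      simp only [Set.mem_setOf_eq, Set.mem_empty_iff_false, iff_false, not_and]
      intro hk h
      have hwin := h (fun v => if v then k else 0)
        (by intro v; cases v <;> simp [hk]) (by simp [divDeg, Fintype.sum_bool])
      refine banana_not_winnable n hn0 _ ?_ hwin
      intro m ⟨h1, h2⟩
      simp at h1 h2
      have hge : (n:ℤ) ≤ n*m := banana_mul_ge n (by omega) m (by omega)
      omega
    rw [Multigraph.rank, hS]
    simp
  · intro v
    rw [Multigraph.rank]
    have hne : (insert (-1) {k : ℤ | 0 ≤ k ∧ ∀ E : Bool → ℤ, Effective E → divDeg E = k →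
        (bananaGraph n (by omega : 0 < n)).Winnable
          ((fun w => if w = v then (n : ℤ) - 1 else 0) - E)}).Nonempty :=
      ⟨-1, Set.mem_insert _ _⟩
    have hle : ∀ x ∈ insert (-1) {k : ℤ | 0 ≤ k ∧ ∀ E : Bool → ℤ, Effective E → divDeg E = k →
        (bananaGraph n (by omega : 0 < n)).Winnable
          ((fun w => if w = v then (n : ℤ) - 1 else 0) - E)}, x ≤ 0 := by
      rintro x (rfl | ⟨hx0, hx⟩)
      · omega
      by_contra hx1
      push_neg at hx1
      have hx1 : 1 ≤ x := hx1
      have hwin := hx (fun w => if w = v then 0 else x)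
        (by intro w; by_cases h : w = v <;> simp [h]; omega)
        (by cases v <;> simp [divDeg, Fintype.sum_bool])
      refine banana_not_winnable n hn0 _ ?_ hwin
      intro m ⟨h1, h2⟩
      cases v
      · -- v = false : D-E = (n-1, -x)
        simp only [Pi.sub_apply] at h1 h2
        norm_num at h1 h2
        have hle' : (n:ℤ)*m ≤ -n := banana_mul_le n (by omega) m (by omega)
        omega
      · -- v = true : D-E = (-x, n-1)
        simp only [Pi.sub_apply] at h1 h2
        norm_num at h1 h2
        have hge : (n:ℤ) ≤ n*m := banana_mul_ge n (by omega) m (by omega)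
        omega
    calc sSup _ ≤ 0 := csSup_le hne hle
      _ < 1 := by omega
end

section
/- Let G = B(ℓ₁,…,ℓ_n) be the subdivided banana graph of genus g = n-1 ≥ 2. Then r((g-1)(Q₂) - (Q₁)) = -1; consequently Q₁ and Q₂ are not Weierstrass points of G. -/
open Finset

/-- Vertex set of the subdivided banana graph B(ℓ₁,…,ℓ_n): the two vertices
Q₁ = Sum.inl false and Q₂ = Sum.inl true, together with the internal vertices
R_{i,1},…,R_{i,ℓᵢ-1} on the i-th path. -/
abbrev BV (n : ℕ) (ℓ : Fin n → ℕ) : Type := Bool ⊕ (Σ i : Fin n, Fin (ℓ i - 1))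

/-- One-directional adjacency for B(ℓ₁,…,ℓ_n): edges go from Q₁ to the first
internal vertex of each path, along each path in increasing order, from the last
internal vertex of each path to Q₂, and directly from Q₁ to Q₂ for each path of
length 1. -/
def badj (n : ℕ) (ℓ : Fin n → ℕ) : BV n ℓ → BV n ℓ → ℕ
  | Sum.inl false, Sum.inl true => (Finset.univ.filter fun i : Fin n => ℓ i = 1).card
  | Sum.inl false, Sum.inr ⟨_, j⟩ => if (j : ℕ) = 0 then 1 else 0
  | Sum.inr ⟨i, j⟩, Sum.inl true => if (j : ℕ) + 2 = ℓ i then 1 else 0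
  | Sum.inr ⟨i, j⟩, Sum.inr ⟨i', j'⟩ => if i = i' ∧ (j' : ℕ) = (j : ℕ) + 1 then 1 else 0
  | _, _ => 0

/-! The endpoint divisors are compared with the divisor `ν` of a linear ordering of the vertices:
list `Q₁` first, then the interior vertices by their distance from `Q₁`, and `Q₂` last. Then
`ν(Q₁) = -1`, `ν(Q₂) = deg Q₂ - 1 = n - 1`, and `ν ≥ 0` at every interior vertex, since it has
a neighbour closer to `Q₁`. Hence `(n - 2)Q₂ - (1 + k)Q₁` for `k ≥ 0` and `(n - 1)Q₂ - kQ₁` for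
`k ≥ 1` lie below `ν` and are not winnable, which bounds the ranks. Reversing every path is an
automorphism swapping `Q₁` and `Q₂`, which gives the statement at `Q₁`. -/

namespace Multigraph

variable {V : Type} [Fintype V] [DecidableEq V] (G : Multigraph V)

section Ordering

variable {α : Type} [LinearOrder α] (ord : V → α)

def orderingDivisor (v : V) : ℤ :=
  ∑ w ∈ univ.filter (fun w => ord w < ord v), (G.mult v w : ℤ) - 1

/-- If `D - E = Δ f`, take `v` maximising `f` and, among the maximisers, minimising `ord`: every
vertex before `v` has strictly smaller `f`, so each edge from `v` to an earlier vertex contributes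
at least one to `(Δ f)(v)`, whence `(Δ f)(v) > ν(v) ≥ D(v) - E(v)`. -/
theorem not_winnable_of_le_orderingDivisor [Nonempty V] {D : V → ℤ}
    (hD : D ≤ G.orderingDivisor ord) : ¬ G.Winnable D := by
  rintro ⟨E, hE, f, hf⟩
  obtain ⟨v, -, hv⟩ := exists_max_image univ (fun v => toLex (f v, OrderDual.toDual (ord v)))
    univ_nonempty
  have hf_le : ∀ w, f w ≤ f v := fun w => by
    have := Prod.Lex.toLex_le_toLex.mp (hv w (mem_univ w))
    omega
  have hf_lt : ∀ w, ord w < ord v → f w < f v := fun w hw => by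
    rcases Prod.Lex.toLex_le_toLex.mp (hv w (mem_univ w)) with h | ⟨h, h'⟩
    · exact h
    · exact absurd h' (not_le.mpr hw)
  have hlap : G.orderingDivisor ord v + 1 ≤ G.laplacian f v :=
    calc G.orderingDivisor ord v + 1
        = ∑ w ∈ univ.filter (fun w => ord w < ord v), (G.mult v w : ℤ) := by
          rw [orderingDivisor, sub_add_cancel]
      _ ≤ ∑ w ∈ univ.filter (fun w => ord w < ord v), (G.mult v w : ℤ) * (f v - f w) := by
          refine sum_le_sum fun w hw => le_mul_of_one_le_right (Int.natCast_nonneg _) ?_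
          have := hf_lt w (mem_filter.mp hw).2
          omega
      _ ≤ ∑ w, (G.mult v w : ℤ) * (f v - f w) :=
          sum_le_sum_of_subset_of_nonneg (filter_subset _ _) fun w _ _ =>
            mul_nonneg (Int.natCast_nonneg _) (sub_nonneg.mpr (hf_le w))
  have hv_eq := congrFun hf v
  have : D v ≤ G.orderingDivisor ord v := hD v
  have := hE v
  rw [Pi.sub_apply] at hv_eq
  omega

theorem orderingDivisor_eq_neg_one {v : V} (hv : ∀ w, ord v ≤ ord w) :
    G.orderingDivisor ord v = -1 := by
  rw [orderingDivisor, filter_false_of_mem fun w _ => not_lt.mpr (hv w), sum_empty, zero_sub]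

theorem orderingDivisor_eq_degree_sub_one {v : V} (hv : ∀ w, w ≠ v → ord w < ord v) :
    G.orderingDivisor ord v = G.degree v - 1 := by
  have hfilter : univ.filter (fun w => ord w < ord v) = univ.erase v := by
    ext w
    simp only [mem_filter, mem_univ, true_and, mem_erase, and_true]
    exact ⟨fun h hw => (hw ▸ h).false, hv w⟩
  rw [orderingDivisor, hfilter, sum_erase _ (by simp [G.loopless]), degree, Nat.cast_sum]

theorem orderingDivisor_nonneg {v w : V} (hwv : ord w < ord v) (hadj : 0 < G.mult v w) :
    0 ≤ G.orderingDivisor ord v := by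
  have : (G.mult v w : ℤ) ≤ ∑ w ∈ univ.filter (fun w => ord w < ord v), (G.mult v w : ℤ) :=
    single_le_sum (fun _ _ => Int.natCast_nonneg _) (mem_filter.mpr ⟨mem_univ w, hwv⟩)
  rw [orderingDivisor]
  omega

end Ordering

section Automorphism

variable {σ : V ≃ V}

theorem degree_apply_equiv (hσ : ∀ u v, G.mult (σ u) (σ v) = G.mult u v) (v : V) :
    G.degree (σ v) = G.degree v := by
  rw [degree, ← σ.sum_comp]
  simp only [hσ, degree]

theorem laplacian_comp_equiv (hσ : ∀ u v, G.mult (σ u) (σ v) = G.mult u v) (f : V → ℤ) :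
    G.laplacian (f ∘ σ) = G.laplacian f ∘ σ := by
  ext v
  simp only [laplacian, Function.comp_apply, ← σ.sum_comp (fun w => (G.mult (σ v) w : ℤ) * _), hσ]

theorem Winnable.comp_equiv {G : Multigraph V} (hσ : ∀ u v, G.mult (σ u) (σ v) = G.mult u v)
    {D : V → ℤ} (hD : G.Winnable D) : G.Winnable (D ∘ σ) := by
  obtain ⟨E, hE, f, hf⟩ := hD
  refine ⟨E ∘ σ, fun v => hE (σ v), f ∘ σ, ?_⟩
  rw [G.laplacian_comp_equiv hσ, ← hf]
  rfl

end Automorphism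

theorem rank_mem_Icc_of_not_winnable_sub_single {D : V → ℤ} (v : V) {m : ℤ} (hm : -1 ≤ m)
    (h : ∀ k, m < k → ¬ G.Winnable (D - Pi.single v k)) : G.rank D ∈ Set.Icc (-1) m := by
  have hbound : ∀ k ∈ insert (-1) {k : ℤ | 0 ≤ k ∧ ∀ E : V → ℤ, Effective E → divDeg E = k →
      G.Winnable (D - E)}, k ≤ m := by
    rintro k (rfl | ⟨-, hk⟩)
    · exact hm
    by_contra! hmk
    refine h k hmk (hk _ (fun w => ?_) ?_)
    · rw [Pi.single_apply]
      split_ifs <;> omega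
    · simp [divDeg]
  exact ⟨le_csSup ⟨m, hbound⟩ (Set.mem_insert _ _), csSup_le (Set.insert_nonempty _ _) hbound⟩

end Multigraph

section Banana

variable {n : ℕ} {ℓ : Fin n → ℕ}

def bananaReverse : BV n ℓ ≃ BV n ℓ :=
  Equiv.sumCongr Equiv.boolNot (Equiv.sigmaCongrRight fun _ => Fin.revPerm)

theorem badj_bananaReverse (u v : BV n ℓ) :
    badj n ℓ (bananaReverse u) (bananaReverse v) = badj n ℓ v u := by
  rcases u with (_ | _) | ⟨i, j⟩ <;> rcases v with (_ | _) | ⟨i', j'⟩ <;>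
    simp [bananaReverse, badj]
  · have := j'.isLt
    split_ifs <;> omega
  · have := j.isLt
    split_ifs <;> omega
  · obtain rfl | hii' := eq_or_ne i i'
    · have := j.isLt
      split_ifs <;> omega
    · simp [hii', hii'.symm]

variable (G : Multigraph (BV n ℓ))

theorem mult_bananaReverse (hmult : ∀ u v, G.mult u v = badj n ℓ u v + badj n ℓ v u)
    (u v : BV n ℓ) :
    G.mult (bananaReverse u) (bananaReverse v) = G.mult u v := by
  rw [hmult, hmult, badj_bananaReverse, badj_bananaReverse, add_comm]

theorem degree_bananaQ₁ (hmult : ∀ u v, G.mult u v = badj n ℓ u v + badj n ℓ v u)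
    (hℓ : ∀ i, 1 ≤ ℓ i) : G.degree (Sum.inl false) = n := by
  have hcol : ∀ w, G.mult (Sum.inl false) w = badj n ℓ (Sum.inl false) w := fun w => by
    rw [hmult]
    rcases w with (_ | _) | _ <;> rfl
  simp only [Multigraph.degree, hcol, Fintype.sum_sum_type, Fintype.sum_bool, ← univ_sigma_univ,
    sum_sigma, badj]
  have hpath : ∀ i, (if ℓ i = 1 then 1 else 0) +
      ∑ j : Fin (ℓ i - 1), (if (j : ℕ) = 0 then 1 else 0) = 1 := fun i => by
    rw [Fin.sum_univ_eq_sum_range (fun j => if j = 0 then 1 else 0), sum_ite_eq']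
    have := hℓ i
    simp only [mem_range]
    split_ifs <;> omega
  rw [card_filter, add_zero, ← sum_add_distrib, sum_congr rfl fun i _ => hpath i, sum_const,
    card_univ, Fintype.card_fin, smul_eq_mul, mul_one]

def bananaOrder : BV n ℓ → ℕ
  | Sum.inl false => 0
  | Sum.inl true => univ.sup ℓ + 1
  | Sum.inr ⟨_, j⟩ => j + 1

theorem not_winnable_of_Q₁_le_neg_one (hmult : ∀ u v, G.mult u v = badj n ℓ u v + badj n ℓ v u)
    (hℓ : ∀ i, 1 ≤ ℓ i) {D : BV n ℓ → ℤ}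
    (hQ₁ : D (Sum.inl false) ≤ -1) (hQ₂ : D (Sum.inl true) ≤ n - 1)
    (hR : ∀ p, D (Sum.inr p) ≤ 0) : ¬ G.Winnable D := by
  refine G.not_winnable_of_le_orderingDivisor bananaOrder ?_
  rintro ((_ | _) | ⟨i, j, hj⟩)
  · rwa [G.orderingDivisor_eq_neg_one _ fun _ => Nat.zero_le _]
  · have hlast : ∀ w : BV n ℓ, w ≠ Sum.inl true →
        bananaOrder w < bananaOrder (Sum.inl true : BV n ℓ) := by
      rintro ((_ | _) | ⟨i, j, hj⟩) hw
      · exact Nat.succ_pos _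
      · exact absurd rfl hw
      · have := le_sup (f := ℓ) (mem_univ i)
        change j + 1 < univ.sup ℓ + 1
        omega
    have hdeg : G.degree (Sum.inl true) = n :=
      (G.degree_apply_equiv (mult_bananaReverse G hmult) (Sum.inl false)).trans
        (degree_bananaQ₁ G hmult hℓ)
    rwa [G.orderingDivisor_eq_degree_sub_one _ hlast, hdeg]
  · refine (hR _).trans ?_
    cases j with
    | zero =>
      exact G.orderingDivisor_nonneg bananaOrder (w := Sum.inl false) Nat.zero_lt_one
        (by simp [hmult, badj])
    | succ j =>
      exact G.orderingDivisor_nonneg bananaOrder (w := Sum.inr ⟨i, j, by omega⟩)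
        (Nat.lt_succ_self _) (by simp [hmult, badj])

theorem not_winnable_of_Q₂_le_neg_one (hmult : ∀ u v, G.mult u v = badj n ℓ u v + badj n ℓ v u)
    (hℓ : ∀ i, 1 ≤ ℓ i) {D : BV n ℓ → ℤ}
    (hQ₁ : D (Sum.inl false) ≤ n - 1) (hQ₂ : D (Sum.inl true) ≤ -1)
    (hR : ∀ p, D (Sum.inr p) ≤ 0) : ¬ G.Winnable D := fun hD =>
  not_winnable_of_Q₁_le_neg_one G hmult hℓ (D := D ∘ bananaReverse) hQ₂ hQ₁ (fun _ => hR _)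
    (hD.comp_equiv (mult_bananaReverse G hmult))

end Banana

theorem subdivided_banana_endpoints_not_weierstrass_general (n : ℕ) (ℓ : Fin n → ℕ)
    (hℓ : ∀ i, 1 ≤ ℓ i)
    (G : Multigraph (BV n ℓ))
    (hmult : ∀ u v : BV n ℓ, G.mult u v = badj n ℓ u v + badj n ℓ v u) :
    G.rank (fun w => if w = Sum.inl true then (n : ℤ) - 2
      else if w = Sum.inl false then -1 else 0) = -1 ∧
    G.rank (fun w => if w = (Sum.inl false : BV n ℓ) then (n : ℤ) - 1 else 0) < 1 ∧
    G.rank (fun w => if w = (Sum.inl true : BV n ℓ) then (n : ℤ) - 1 else 0) < 1 := by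
  refine ⟨?_, ?_, ?_⟩
  · suffices h : _ ∈ Set.Icc (-1 : ℤ) (-1) from le_antisymm h.2 h.1
    refine G.rank_mem_Icc_of_not_winnable_sub_single (Sum.inl false) le_rfl fun k hk => ?_
    apply not_winnable_of_Q₁_le_neg_one G hmult hℓ <;> simp
    omega
  · refine (G.rank_mem_Icc_of_not_winnable_sub_single (Sum.inl true) (m := 0) (by norm_num)
      fun k hk => ?_).2.trans_lt zero_lt_one
    apply not_winnable_of_Q₂_le_neg_one G hmult hℓ <;> simp
    omega
  · refine (G.rank_mem_Icc_of_not_winnable_sub_single (Sum.inl false) (m := 0) (by norm_num)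
      fun k hk => ?_).2.trans_lt zero_lt_one
    apply not_winnable_of_Q₁_le_neg_one G hmult hℓ <;> simp
    omega

/-- On the subdivided banana graph G = B(ℓ₁,…,ℓ_n) (n ≥ 3, each ℓᵢ ≥ 1), of
genus g = n - 1 ≥ 2, the divisor (g-1)(Q₂) - (Q₁) has rank -1; consequently
neither Q₁ nor Q₂ is a Weierstrass point (r(g·(Qᵢ)) < 1). -/
theorem subdivided_banana_endpoints_not_weierstrass (n : ℕ) (ℓ : Fin n → ℕ)
    (hn : 3 ≤ n) (hℓ : ∀ i, 1 ≤ ℓ i)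
    (G : Multigraph (BV n ℓ))
    (hmult : ∀ u v : BV n ℓ, G.mult u v = badj n ℓ u v + badj n ℓ v u) :
    G.rank (fun w => if w = Sum.inl true then (n : ℤ) - 2
      else if w = Sum.inl false then -1 else 0) = -1 ∧
    G.rank (fun w => if w = (Sum.inl false : BV n ℓ) then (n : ℤ) - 1 else 0) < 1 ∧
    G.rank (fun w => if w = (Sum.inl true : BV n ℓ) then (n : ℤ) - 1 else 0) < 1 :=
  subdivided_banana_endpoints_not_weierstrass_general n ℓ hℓ G hmult
end

section
/- Let Γ be the metric graph associated to the banana graph B_n with n ≥ 4 edges, each edge e_i identified with [0,1] (Q₁ at 0, Q₂ at 1). For every point P on an edge e_i with coordinate x(P) ∈ [1/3, 2/3], one has r(3(P)) ≥ 1; in particular, Γ has infinitely many Weierstrass points. -/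
open scoped Classical

/-- g has (integer) slope s in a one-sided neighborhood to the right of x. -/
def HasRightSlope (g : ℝ → ℝ) (x : ℝ) (s : ℤ) : Prop :=
  ∃ ε > (0 : ℝ), ∀ t : ℝ, x ≤ t → t ≤ x + ε → g t = g x + s * (t - x)

/-- g has (integer) slope s in a one-sided neighborhood to the left of x. -/
def HasLeftSlope (g : ℝ → ℝ) (x : ℝ) (s : ℤ) : Prop :=
  ∃ ε > (0 : ℝ), ∀ t : ℝ, x - ε ≤ t → t ≤ x → g t = g x + s * (t - x)

/-- g is (continuous) piecewise affine with integer slopes on [0, L]. -/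
def PAIntOn (L : ℝ) (g : ℝ → ℝ) : Prop :=
  ∃ (m : ℕ) (t : Fin (m + 1) → ℝ), Monotone t ∧ t 0 = 0 ∧ t (Fin.last m) = L ∧
    ∀ k : Fin m, ∃ s : ℤ, ∀ x ∈ Set.Icc (t k.castSucc) (t k.succ),
      g x = g (t k.castSucc) + s * (x - t k.castSucc)

/-- The points of the metric banana graph Γ with n edges of length 1:
Q₁ = Sum.inl false, Q₂ = Sum.inl true, and the interior points (i, x) with
0 < x < 1 of the i-th edge (Q₁ at coordinate 0, Q₂ at coordinate 1). -/
abbrev BPt (n : ℕ) := Bool ⊕ (Fin n × {x : ℝ // 0 < x ∧ x < 1})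

/-- A rational function on the metric banana graph: a continuous piecewise
affine function with integer slopes on each edge, with matching values at the
two branch points. -/
structure BFn (n : ℕ) where
  f : Fin n → ℝ → ℝ
  agree0 : ∀ i j, f i 0 = f j 0
  agree1 : ∀ i j, f i 1 = f j 1
  pa : ∀ i, PAIntOn 1 (f i)

/-- `BEff n F D` says that (F) + D ≥ 0, where (F) = -Σ_P σ_P(F)(P) is the
divisor of the rational function F (σ_P(F) being the sum of the slopes of F in
all directions emanating from P). -/
def BEff (n : ℕ) (F : BFn n) (D : BPt n → ℤ) : Prop :=
  (∀ s : Fin n → ℤ, (∀ i, HasRightSlope (F.f i) 0 (s i)) →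
    0 ≤ -(∑ i, s i) + D (Sum.inl false)) ∧
  (∀ s : Fin n → ℤ, (∀ i, HasLeftSlope (F.f i) 1 (s i)) →
    0 ≤ (∑ i, s i) + D (Sum.inl true)) ∧
  (∀ (i : Fin n) (x : {x : ℝ // 0 < x ∧ x < 1}) (sp sm : ℤ),
    HasRightSlope (F.f i) (x : ℝ) sp → HasLeftSlope (F.f i) (x : ℝ) sm →
    0 ≤ (sm - sp) + D (Sum.inr (i, x)))

-- uniqueness of one-sided slopes
lemma rslope_unique {g : ℝ → ℝ} {x : ℝ} {s s' : ℤ}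
    (h : HasRightSlope g x s) (h' : HasRightSlope g x s') : s = s' := by
  obtain ⟨e, he, hf⟩ := h
  obtain ⟨e', he', hf'⟩ := h'
  set m := min e e' with hm
  have hm0 : 0 < m := lt_min he he'
  have h1 := hf (x + m) (by linarith) (by simp [hm])
  have h2 := hf' (x + m) (by linarith) (by simp [hm])
  rw [show x + m - x = m by ring] at h1 h2
  have : (s : ℝ) * m = (s' : ℝ) * m := by linarith
  have : (s : ℝ) = s' := mul_right_cancel₀ (ne_of_gt hm0) this
  exact_mod_cast this

lemma lslope_unique {g : ℝ → ℝ} {x : ℝ} {s s' : ℤ}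
    (h : HasLeftSlope g x s) (h' : HasLeftSlope g x s') : s = s' := by
  obtain ⟨e, he, hf⟩ := h
  obtain ⟨e', he', hf'⟩ := h'
  set m := min e e' with hm
  have hm0 : 0 < m := lt_min he he'
  have h1 := hf (x - m) (by simp [hm]; nlinarith [min_le_left e e']) (by linarith)
  have h2 := hf' (x - m) (by simp [hm]; nlinarith [min_le_right e e']) (by linarith)
  rw [show x - m - x = -m by ring] at h1 h2
  have : (s : ℝ) * (-m) = (s' : ℝ) * (-m) := by linarith
  have : (s : ℝ) = s' := mul_right_cancel₀ (by linarith) this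
  exact_mod_cast this

lemma rs_zero (x : ℝ) : HasRightSlope (fun _ => 0) x 0 := ⟨1, one_pos, by simp⟩
lemma ls_zero (x : ℝ) : HasLeftSlope (fun _ => 0) x 0 := ⟨1, one_pos, by simp⟩

lemma pa_zero : PAIntOn 1 (fun _ => (0:ℝ)) := by
  refine ⟨1, ![0, 1], ?_, by simp, by simp [Fin.last], ?_⟩
  · intro a b hab
    fin_cases a <;> fin_cases b <;> simp_all
  · intro k
    exact ⟨0, by simp⟩

noncomputable def P4 (t₁ t₂ t₃ : ℝ) (s₁ s₂ s₃ s₄ : ℤ) (t : ℝ) : ℝ :=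
  if t ≤ t₁ then s₁ * t
  else if t ≤ t₂ then s₁ * t₁ + s₂ * (t - t₁)
  else if t ≤ t₃ then s₁ * t₁ + s₂ * (t₂ - t₁) + s₃ * (t - t₂)
  else s₁ * t₁ + s₂ * (t₂ - t₁) + s₃ * (t₃ - t₂) + s₄ * (t - t₃)

variable {t₁ t₂ t₃ : ℝ} {s₁ s₂ s₃ s₄ : ℤ}

lemma P4_val₁ {t : ℝ} (h : t ≤ t₁) : P4 t₁ t₂ t₃ s₁ s₂ s₃ s₄ t = s₁ * t := by
  simp [P4, h]

lemma P4_val₂ {t : ℝ} (h1 : t₁ ≤ t) (h2 : t ≤ t₂) :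
    P4 t₁ t₂ t₃ s₁ s₂ s₃ s₄ t = s₁ * t₁ + s₂ * (t - t₁) := by
  unfold P4
  split_ifs with ha
  · have : t = t₁ := le_antisymm ha h1
    subst this; ring
  · ring_nf

lemma P4_val₃ {t : ℝ} (h12 : t₁ ≤ t₂) (h1 : t₂ ≤ t) (h2 : t ≤ t₃) :
    P4 t₁ t₂ t₃ s₁ s₂ s₃ s₄ t = s₁ * t₁ + s₂ * (t₂ - t₁) + s₃ * (t - t₂) := by
  unfold P4
  split_ifs with ha hb
  · have ht : t = t₂ := le_antisymm (le_trans ha h12) h1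
    have ht' : t₁ = t₂ := le_antisymm h12 (le_trans h1 ha)
    subst ht; rw [← ht']; ring
  · have : t = t₂ := le_antisymm hb h1
    subst this; ring
  · ring_nf

lemma P4_val₄ {t : ℝ} (h12 : t₁ ≤ t₂) (h23 : t₂ ≤ t₃) (h1 : t₃ ≤ t) :
    P4 t₁ t₂ t₃ s₁ s₂ s₃ s₄ t =
      s₁ * t₁ + s₂ * (t₂ - t₁) + s₃ * (t₃ - t₂) + s₄ * (t - t₃) := by
  unfold P4
  split_ifs with ha hb hc
  · have e1 : t₁ = t := le_antisymm (by linarith) (by linarith)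
    have e2 : t₂ = t := le_antisymm (by linarith) (by linarith)
    have e3 : t₃ = t := le_antisymm (by linarith) (by linarith)
    subst e1; subst e2; subst e3; ring
  · have e2 : t₂ = t := le_antisymm (by linarith) (by linarith)
    have e3 : t₃ = t := le_antisymm (by linarith) (by linarith)
    subst e2; subst e3; ring
  · have e3 : t₃ = t := le_antisymm (by linarith) (by linarith)
    subst e3; ring
  · ring_nf

section P4Slopes
variable {t₁ t₂ t₃ : ℝ} {s₁ s₂ s₃ s₄ : ℤ}

lemma P4_rs₁ {x : ℝ} (h : x < t₁) : HasRightSlope (P4 t₁ t₂ t₃ s₁ s₂ s₃ s₄) x s₁ := by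
  refine ⟨t₁ - x, by linarith, fun t h1 h2 => ?_⟩
  rw [P4_val₁ (by linarith : t ≤ t₁), P4_val₁ (le_of_lt h)]; ring

lemma P4_rs₂ {x : ℝ} (ha : t₁ ≤ x) (h : x < t₂) :
    HasRightSlope (P4 t₁ t₂ t₃ s₁ s₂ s₃ s₄) x s₂ := by
  refine ⟨t₂ - x, by linarith, fun t h1 h2 => ?_⟩
  rw [P4_val₂ (by linarith) (by linarith), P4_val₂ ha (le_of_lt h)]; ring

lemma P4_rs₃ {x : ℝ} (h12 : t₁ ≤ t₂) (ha : t₂ ≤ x) (h : x < t₃) :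
    HasRightSlope (P4 t₁ t₂ t₃ s₁ s₂ s₃ s₄) x s₃ := by
  refine ⟨t₃ - x, by linarith, fun t h1 h2 => ?_⟩
  rw [P4_val₃ h12 (by linarith) (by linarith), P4_val₃ h12 ha (le_of_lt h)]; ring

lemma P4_rs₄ {x : ℝ} (h12 : t₁ ≤ t₂) (h23 : t₂ ≤ t₃) (ha : t₃ ≤ x) :
    HasRightSlope (P4 t₁ t₂ t₃ s₁ s₂ s₃ s₄) x s₄ := by
  refine ⟨1, one_pos, fun t h1 h2 => ?_⟩
  rw [P4_val₄ h12 h23 (by linarith), P4_val₄ h12 h23 ha]; ring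

lemma P4_ls₁ {x : ℝ} (h : x ≤ t₁) : HasLeftSlope (P4 t₁ t₂ t₃ s₁ s₂ s₃ s₄) x s₁ := by
  refine ⟨1, one_pos, fun t h1 h2 => ?_⟩
  rw [P4_val₁ (by linarith : t ≤ t₁), P4_val₁ h]; ring

lemma P4_ls₂ {x : ℝ} (ha : t₁ < x) (h : x ≤ t₂) :
    HasLeftSlope (P4 t₁ t₂ t₃ s₁ s₂ s₃ s₄) x s₂ := by
  refine ⟨x - t₁, by linarith, fun t h1 h2 => ?_⟩
  rw [P4_val₂ (by linarith) (by linarith), P4_val₂ (le_of_lt ha) h]; ring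

lemma P4_ls₃ {x : ℝ} (h12 : t₁ ≤ t₂) (ha : t₂ < x) (h : x ≤ t₃) :
    HasLeftSlope (P4 t₁ t₂ t₃ s₁ s₂ s₃ s₄) x s₃ := by
  refine ⟨x - t₂, by linarith, fun t h1 h2 => ?_⟩
  rw [P4_val₃ h12 (by linarith) (by linarith), P4_val₃ h12 (le_of_lt ha) h]; ring

lemma P4_ls₄ {x : ℝ} (h12 : t₁ ≤ t₂) (h23 : t₂ ≤ t₃) (ha : t₃ < x) :
    HasLeftSlope (P4 t₁ t₂ t₃ s₁ s₂ s₃ s₄) x s₄ := by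
  refine ⟨x - t₃, by linarith, fun t h1 h2 => ?_⟩
  rw [P4_val₄ h12 h23 (by linarith), P4_val₄ h12 h23 (le_of_lt ha)]; ring

lemma P4_zero (h0 : 0 ≤ t₁) : P4 t₁ t₂ t₃ s₁ s₂ s₃ s₄ 0 = 0 := by
  rw [P4_val₁ h0]; ring

lemma P4_pa (h0 : 0 ≤ t₁) (h12 : t₁ ≤ t₂) (h23 : t₂ ≤ t₃) (h31 : t₃ ≤ 1) :
    PAIntOn 1 (P4 t₁ t₂ t₃ s₁ s₂ s₃ s₄) := by
  refine ⟨4, ![0, t₁, t₂, t₃, 1], ?_, by simp, by simp [Fin.last], ?_⟩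
  · rw [Fin.monotone_iff_le_succ]
    intro i
    fin_cases i <;>
      simp [Fin.castSucc, Fin.castAdd, Fin.castLE, Fin.succ] <;> linarith
  · intro k
    fin_cases k
    · refine ⟨s₁, fun x hx => ?_⟩
      simp only [Fin.castSucc, Fin.castAdd, Fin.castLE, Fin.succ] at hx ⊢
      simp only [show ((⟨0, by omega⟩ : Fin 5)) = (0 : Fin 5) from rfl] at hx ⊢
      simp only [Matrix.cons_val_zero, Matrix.cons_val_one] at hx ⊢
      norm_num at hx ⊢
      rw [P4_val₁ hx.2, P4_val₁ h0]
      ring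
    · refine ⟨s₂, fun x hx => ?_⟩
      simp [Fin.castSucc, Fin.castAdd, Fin.castLE, Fin.succ] at hx ⊢
      rw [P4_val₂ hx.1 hx.2, P4_val₂ (le_refl t₁) h12]
      ring
    · refine ⟨s₃, fun x hx => ?_⟩
      simp [Fin.castSucc, Fin.castAdd, Fin.castLE, Fin.succ] at hx ⊢
      rw [P4_val₃ h12 hx.1 hx.2, P4_val₃ h12 (le_refl t₂) h23]
      ring
    · refine ⟨s₄, fun x hx => ?_⟩
      simp [Fin.castSucc, Fin.castAdd, Fin.castLE, Fin.succ] at hx ⊢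
      rw [P4_val₄ h12 h23 hx.1, P4_val₄ h12 h23 (le_refl t₃)]
      ring

end P4Slopes

section More
variable {t₁ t₂ t₃ : ℝ} {s₁ s₂ s₃ s₄ : ℤ}

lemma P4_rs (h12 : t₁ ≤ t₂) (h23 : t₂ ≤ t₃) (x : ℝ) :
    HasRightSlope (P4 t₁ t₂ t₃ s₁ s₂ s₃ s₄) x
      (if x < t₁ then s₁ else if x < t₂ then s₂ else if x < t₃ then s₃ else s₄) := by
  split_ifs with h1 h2 h3
  · exact P4_rs₁ h1
  · exact P4_rs₂ (by linarith) h2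
  · exact P4_rs₃ h12 (by linarith) h3
  · exact P4_rs₄ h12 h23 (by linarith)

lemma P4_ls (h12 : t₁ ≤ t₂) (h23 : t₂ ≤ t₃) (x : ℝ) :
    HasLeftSlope (P4 t₁ t₂ t₃ s₁ s₂ s₃ s₄) x
      (if t₃ < x then s₄ else if t₂ < x then s₃ else if t₁ < x then s₂ else s₁) := by
  split_ifs with h1 h2 h3
  · exact P4_ls₄ h12 h23 h1
  · exact P4_ls₃ h12 h2 (by linarith)
  · exact P4_ls₂ h3 (by linarith)
  · exact P4_ls₁ (by linarith)

end More

lemma sum_single_supp {n : ℕ} (s : Fin n → ℤ) (a : Fin n)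
    (h : ∀ i, i ≠ a → s i = 0) : ∑ i, s i = s a :=
  Finset.sum_eq_single a (fun b _ hb => h b hb) (by simp)

lemma sum_pair_supp {n : ℕ} (s : Fin n → ℤ) (a b : Fin n) (hab : a ≠ b)
    (h : ∀ i, i ≠ a → i ≠ b → s i = 0) : ∑ i, s i = s a + s b :=
  Finset.sum_eq_add_of_mem a b (by simp) (by simp) hab
    (fun c _ hc => h c hc.1 hc.2)

lemma BEff_mono {n : ℕ} {F : BFn n} {D D' : BPt n → ℤ} (h : ∀ R, D R ≤ D' R)
    (hF : BEff n F D) : BEff n F D' := by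
  obtain ⟨h1, h2, h3⟩ := hF
  refine ⟨fun s hs => ?_, fun s hs => ?_, fun i x sp sm hp hm => ?_⟩
  · have := h1 s hs; have := h (Sum.inl false); omega
  · have := h2 s hs; have := h (Sum.inl true); omega
  · have := h3 i x sp sm hp hm; have := h (Sum.inr (i, x)); omega

/-- one-distinguished-edge function family -/
noncomputable def oneE {n : ℕ} (i₀ : Fin n) (G : ℝ → ℝ) : Fin n → ℝ → ℝ :=
  fun i => if i = i₀ then G else fun _ => 0

noncomputable def twoE {n : ℕ} (i₀ j : Fin n) (G H : ℝ → ℝ) : Fin n → ℝ → ℝ :=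
  fun i => if i = i₀ then G else if i = j then H else fun _ => 0

lemma oneE_self {n : ℕ} (i₀ : Fin n) (G : ℝ → ℝ) : oneE i₀ G i₀ = G := by
  simp [oneE]

lemma oneE_other {n : ℕ} {i i₀ : Fin n} (h : i ≠ i₀) (G : ℝ → ℝ) :
    oneE i₀ G i = fun _ => 0 := by simp [oneE, h]

lemma twoE_fst {n : ℕ} (i₀ j : Fin n) (G H : ℝ → ℝ) : twoE i₀ j G H i₀ = G := by
  simp [twoE]

lemma twoE_snd {n : ℕ} {i₀ j : Fin n} (hij : j ≠ i₀) (G H : ℝ → ℝ) :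
    twoE i₀ j G H j = H := by simp [twoE, hij]

lemma twoE_other {n : ℕ} {i i₀ j : Fin n} (h : i ≠ i₀) (h' : i ≠ j) (G H : ℝ → ℝ) :
    twoE i₀ j G H i = fun _ => 0 := by simp [twoE, h, h']

noncomputable def mkOne {n : ℕ} (i₀ : Fin n) (G : ℝ → ℝ) (h0 : G 0 = 0)
    (h1 : G 1 = 0) (hpa : PAIntOn 1 G) : BFn n where
  f := oneE i₀ G
  agree0 := by intro a b; unfold oneE; split_ifs <;> simp [h0]
  agree1 := by intro a b; unfold oneE; split_ifs <;> simp [h1]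
  pa := by intro i; unfold oneE; split_ifs; exacts [hpa, pa_zero]

noncomputable def mkTwo {n : ℕ} (i₀ j : Fin n) (G H : ℝ → ℝ) (hG0 : G 0 = 0)
    (hG1 : G 1 = 0) (hH0 : H 0 = 0) (hH1 : H 1 = 0)
    (hpaG : PAIntOn 1 G) (hpaH : PAIntOn 1 H) : BFn n where
  f := twoE i₀ j G H
  agree0 := by intro a b; unfold twoE; split_ifs <;> simp [hG0, hH0]
  agree1 := by intro a b; unfold twoE; split_ifs <;> simp [hG1, hH1]
  pa := by intro i; unfold twoE; split_ifs; exacts [hpaG, hpaH, pa_zero]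

lemma case_Qleft {n : ℕ} (i₀ : Fin n) (x₀ : {x : ℝ // 0 < x ∧ x < 1})
    (h13 : 1/3 ≤ (x₀:ℝ)) (h23 : (x₀:ℝ) ≤ 2/3) :
    ∃ F : BFn n, BEff n F (fun R => 3 * (if R = Sum.inr (i₀, x₀) then 1 else 0)
      - (if R = Sum.inl false then 1 else 0)) := by
  obtain ⟨hx0, hx1⟩ := x₀.2
  set c : ℝ := (x₀:ℝ) with hc
  set r : ℝ := 3 * (x₀:ℝ) / 2 with hr
  have h0c : (0:ℝ) ≤ c := le_of_lt hx0
  have hcr : c ≤ r := by rw [hc, hr]; linarith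
  have hrr : r ≤ r := le_refl r
  have hcrs : c < r := by rw [hc, hr]; linarith
  have hr1 : r ≤ 1 := by rw [hr]; linarith
  set G : ℝ → ℝ := P4 c r r (-1) 2 0 0 with hG
  have hG0 : G 0 = 0 := P4_zero h0c
  have hG1 : G 1 = 0 := by
    rw [hG, P4_val₄ hcr hrr hr1]; push_cast; rw [hr]; ring
  refine ⟨mkOne i₀ G hG0 hG1 (P4_pa h0c hcr hrr hr1), ?_, ?_, ?_⟩
  · -- at Q₁
    intro s hs
    have hz : ∀ i, i ≠ i₀ → s i = 0 := by
      intro i hi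
      have h := hs i
      rw [show (mkOne i₀ G hG0 hG1 _).f = oneE i₀ G from rfl, oneE_other hi] at h
      exact rslope_unique h (rs_zero 0)
    have hi0 : s i₀ = -1 := by
      have h := hs i₀
      rw [show (mkOne i₀ G hG0 hG1 _).f = oneE i₀ G from rfl, oneE_self] at h
      exact rslope_unique h (P4_rs₁ hx0)
    rw [sum_single_supp s i₀ hz, hi0]
    simp
  · -- at Q₂
    intro s hs
    have hz : ∀ i, i ≠ i₀ → s i = 0 := by
      intro i hi
      have h := hs i
      rw [show (mkOne i₀ G hG0 hG1 _).f = oneE i₀ G from rfl, oneE_other hi] at h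
      exact lslope_unique h (ls_zero 1)
    have h := hs i₀
    rw [show (mkOne i₀ G hG0 hG1 _).f = oneE i₀ G from rfl, oneE_self] at h
    rcases lt_or_eq_of_le hr1 with hlt | heq
    · have hi0 : s i₀ = 0 := lslope_unique h (P4_ls₄ hcr hrr hlt)
      rw [sum_single_supp s i₀ hz, hi0]; simp
    · have hi0 : s i₀ = 2 := lslope_unique h (P4_ls₂ (by rw [hc]; linarith) (le_of_eq heq.symm))
      rw [sum_single_supp s i₀ hz, hi0]; simp
  · -- interior
    intro i x sp sm hp hm
    by_cases hii : i = i₀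
    · subst hii
      have hp' := hp; have hm' := hm
      rw [show (mkOne i G hG0 hG1 _).f = oneE i G from rfl, oneE_self] at hp' hm'
      have ep : sp = (if (x:ℝ) < c then -1 else if (x:ℝ) < r then 2
          else if (x:ℝ) < r then 0 else 0) := rslope_unique hp' (P4_rs hcr hrr _)
      have em : sm = (if r < (x:ℝ) then 0 else if r < (x:ℝ) then 0
          else if c < (x:ℝ) then 2 else -1) := lslope_unique hm' (P4_ls hcr hrr _)
      rcases lt_trichotomy (x:ℝ) (x₀:ℝ) with hxc | hxc | hxc
      · dsimp only
        rw [if_neg (by simp; intro h; exact absurd (congrArg Subtype.val h) (ne_of_lt hxc)),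
          if_neg (by simp)]
        rw [ep, em]
        split_ifs <;> first | omega | (exfalso; linarith)
      · dsimp only
        rw [if_pos (by rw [Subtype.ext hxc]), if_neg (by simp)]
        rw [ep, em]
        split_ifs <;> first | omega | (exfalso; linarith)
      · dsimp only
        rw [if_neg (by simp; intro h; exact absurd (congrArg Subtype.val h) (ne_of_gt hxc)),
          if_neg (by simp)]
        rw [ep, em]
        split_ifs <;> first | omega | (exfalso; linarith)
    · have hp' := hp; have hm' := hm
      rw [show (mkOne i₀ G hG0 hG1 _).f = oneE i₀ G from rfl, oneE_other hii] at hp' hm'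
      have ep : sp = 0 := rslope_unique hp' (rs_zero _)
      have em : sm = 0 := lslope_unique hm' (ls_zero _)
      dsimp only
      rw [ep, em, if_neg (by simp [hii]), if_neg (by simp)]
      norm_num

lemma case_Qright {n : ℕ} (i₀ : Fin n) (x₀ : {x : ℝ // 0 < x ∧ x < 1})
    (h13 : 1/3 ≤ (x₀:ℝ)) (h23 : (x₀:ℝ) ≤ 2/3) :
    ∃ F : BFn n, BEff n F (fun R => 3 * (if R = Sum.inr (i₀, x₀) then 1 else 0)
      - (if R = Sum.inl true then 1 else 0)) := by
  obtain ⟨hx0, hx1⟩ := x₀.2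
  set c : ℝ := (x₀:ℝ) with hc
  set l : ℝ := (3 * (x₀:ℝ) - 1) / 2 with hl
  have h0l : (0:ℝ) ≤ l := by rw [hl]; linarith
  have hlc : l ≤ c := by rw [hl, hc]; linarith
  have hlcs : l < c := by rw [hl, hc]; linarith
  have hc1 : c ≤ 1 := le_of_lt hx1
  have h11 : (1:ℝ) ≤ 1 := le_refl 1
  set G : ℝ → ℝ := P4 l c 1 0 (-2) 1 1 with hG
  have hG0 : G 0 = 0 := P4_zero h0l
  have hG1 : G 1 = 0 := by
    rw [hG, P4_val₄ hlc hc1 h11]; push_cast; rw [hl, hc]; ring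
  refine ⟨mkOne i₀ G hG0 hG1 (P4_pa h0l hlc hc1 h11), ?_, ?_, ?_⟩
  · intro s hs
    have hz : ∀ i, i ≠ i₀ → s i = 0 := by
      intro i hi
      have h := hs i
      rw [show (mkOne i₀ G hG0 hG1 _).f = oneE i₀ G from rfl, oneE_other hi] at h
      exact rslope_unique h (rs_zero 0)
    have h := hs i₀
    rw [show (mkOne i₀ G hG0 hG1 _).f = oneE i₀ G from rfl, oneE_self] at h
    rcases lt_or_eq_of_le h0l with hlt | heq
    · have hi0 : s i₀ = 0 := rslope_unique h (P4_rs₁ hlt)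
      rw [sum_single_supp s i₀ hz, hi0]; simp
    · have hi0 : s i₀ = -2 := rslope_unique h (P4_rs₂ (le_of_eq heq.symm) hx0)
      rw [sum_single_supp s i₀ hz, hi0]; simp
  · intro s hs
    have hz : ∀ i, i ≠ i₀ → s i = 0 := by
      intro i hi
      have h := hs i
      rw [show (mkOne i₀ G hG0 hG1 _).f = oneE i₀ G from rfl, oneE_other hi] at h
      exact lslope_unique h (ls_zero 1)
    have h := hs i₀
    rw [show (mkOne i₀ G hG0 hG1 _).f = oneE i₀ G from rfl, oneE_self] at h
    have hi0 : s i₀ = 1 := lslope_unique h (P4_ls₃ hlc hx1 h11)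
    rw [sum_single_supp s i₀ hz, hi0]; simp
  · intro i x sp sm hp hm
    by_cases hii : i = i₀
    · subst hii
      have hp' := hp; have hm' := hm
      rw [show (mkOne i G hG0 hG1 _).f = oneE i G from rfl, oneE_self] at hp' hm'
      have ep : sp = (if (x:ℝ) < l then 0 else if (x:ℝ) < c then -2
          else if (x:ℝ) < 1 then 1 else 1) := rslope_unique hp' (P4_rs hlc hc1 _)
      have em : sm = (if 1 < (x:ℝ) then 1 else if c < (x:ℝ) then 1
          else if l < (x:ℝ) then -2 else 0) := lslope_unique hm' (P4_ls hlc hc1 _)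
      rcases lt_trichotomy (x:ℝ) (x₀:ℝ) with hxc | hxc | hxc
      · dsimp only
        rw [if_neg (by simp; intro h; exact absurd (congrArg Subtype.val h) (ne_of_lt hxc)),
          if_neg (by simp)]
        rw [ep, em]
        split_ifs <;> first | omega | (exfalso; linarith)
      · dsimp only
        rw [if_pos (by rw [Subtype.ext hxc]), if_neg (by simp)]
        rw [ep, em]
        split_ifs <;> first | omega | (exfalso; linarith)
      · dsimp only
        rw [if_neg (by simp; intro h; exact absurd (congrArg Subtype.val h) (ne_of_gt hxc)),
          if_neg (by simp)]
        rw [ep, em]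
        split_ifs <;> first | omega | (exfalso; linarith)
    · have hp' := hp; have hm' := hm
      rw [show (mkOne i₀ G hG0 hG1 _).f = oneE i₀ G from rfl, oneE_other hii] at hp' hm'
      have ep : sp = 0 := rslope_unique hp' (rs_zero _)
      have em : sm = 0 := lslope_unique hm' (ls_zero _)
      dsimp only
      rw [ep, em, if_neg (by simp [hii]), if_neg (by simp)]
      norm_num

lemma case_same_lt {n : ℕ} (i₀ : Fin n) (x₀ y : {x : ℝ // 0 < x ∧ x < 1})
    (h13 : 1/3 ≤ (x₀:ℝ)) (h23 : (x₀:ℝ) ≤ 2/3) (hyx : (y:ℝ) < (x₀:ℝ)) :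
    ∃ F : BFn n, BEff n F (fun R => 3 * (if R = Sum.inr (i₀, x₀) then 1 else 0)
      - (if R = Sum.inr (i₀, y) then 1 else 0)) := by
  obtain ⟨hx0, hx1⟩ := x₀.2
  obtain ⟨hy0, hy1⟩ := y.2
  set c : ℝ := (x₀:ℝ) with hc
  set b : ℝ := (y:ℝ) with hb
  set r : ℝ := (3 * (x₀:ℝ) - (y:ℝ)) / 2 with hr
  have h0b : (0:ℝ) ≤ b := le_of_lt hy0
  have hbc : b ≤ c := le_of_lt hyx
  have hcr : c ≤ r := by rw [hc, hr]; linarith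
  have hcrs : c < r := by rw [hc, hr]; linarith
  have hr1 : r ≤ 1 := by rw [hr]; linarith
  have hr1s : r < 1 := by rw [hr]; linarith
  set G : ℝ → ℝ := P4 b c r 0 (-1) 2 0 with hG
  have hG0 : G 0 = 0 := P4_zero h0b
  have hG1 : G 1 = 0 := by
    rw [hG, P4_val₄ hbc hcr hr1]; push_cast; rw [hb, hc, hr]; ring
  refine ⟨mkOne i₀ G hG0 hG1 (P4_pa h0b hbc hcr hr1), ?_, ?_, ?_⟩
  · intro s hs
    have hz : ∀ i, i ≠ i₀ → s i = 0 := by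
      intro i hi
      have h := hs i
      rw [show (mkOne i₀ G hG0 hG1 _).f = oneE i₀ G from rfl, oneE_other hi] at h
      exact rslope_unique h (rs_zero 0)
    have h := hs i₀
    rw [show (mkOne i₀ G hG0 hG1 _).f = oneE i₀ G from rfl, oneE_self] at h
    have hi0 : s i₀ = 0 := rslope_unique h (P4_rs₁ hy0)
    rw [sum_single_supp s i₀ hz, hi0]; simp
  · intro s hs
    have hz : ∀ i, i ≠ i₀ → s i = 0 := by
      intro i hi
      have h := hs i
      rw [show (mkOne i₀ G hG0 hG1 _).f = oneE i₀ G from rfl, oneE_other hi] at h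
      exact lslope_unique h (ls_zero 1)
    have h := hs i₀
    rw [show (mkOne i₀ G hG0 hG1 _).f = oneE i₀ G from rfl, oneE_self] at h
    have hi0 : s i₀ = 0 := lslope_unique h (P4_ls₄ hbc hcr hr1s)
    rw [sum_single_supp s i₀ hz, hi0]; simp
  · intro i x sp sm hp hm
    by_cases hii : i = i₀
    · subst hii
      have hp' := hp; have hm' := hm
      rw [show (mkOne i G hG0 hG1 _).f = oneE i G from rfl, oneE_self] at hp' hm'
      have ep : sp = (if (x:ℝ) < b then 0 else if (x:ℝ) < c then -1
          else if (x:ℝ) < r then 2 else 0) := rslope_unique hp' (P4_rs hbc hcr _)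
      have em : sm = (if r < (x:ℝ) then 0 else if c < (x:ℝ) then 2
          else if b < (x:ℝ) then -1 else 0) := lslope_unique hm' (P4_ls hbc hcr _)
      dsimp only
      rcases lt_trichotomy (x:ℝ) (y:ℝ) with hxy | hxy | hxy
      · rw [if_neg (by simp; intro h; exact absurd (congrArg Subtype.val h) (by rw [← hc]; intro hh; rw [hh] at hxy; linarith)),
          if_neg (by simp; intro h; exact absurd (congrArg Subtype.val h) (ne_of_lt hxy))]
        rw [ep, em]
        split_ifs <;> first | omega | (exfalso; linarith)
      · rw [if_neg (by simp; intro h; exact absurd (congrArg Subtype.val h) (by rw [← hc]; intro hh; rw [hh] at hxy; linarith)),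
          if_pos (by rw [Subtype.ext hxy])]
        rw [ep, em]
        split_ifs <;> first | omega | (exfalso; linarith)
      · rcases lt_trichotomy (x:ℝ) (x₀:ℝ) with hxc | hxc | hxc
        · rw [if_neg (by simp; intro h; exact absurd (congrArg Subtype.val h) (ne_of_lt hxc)),
            if_neg (by simp; intro h; exact absurd (congrArg Subtype.val h) (ne_of_gt hxy))]
          rw [ep, em]
          split_ifs <;> first | omega | (exfalso; linarith)
        · rw [if_pos (by rw [Subtype.ext hxc]),
            if_neg (by simp; intro h; exact absurd (congrArg Subtype.val h) (ne_of_gt hxy))]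
          rw [ep, em]
          split_ifs <;> first | omega | (exfalso; linarith)
        · rw [if_neg (by simp; intro h; exact absurd (congrArg Subtype.val h) (ne_of_gt hxc)),
            if_neg (by simp; intro h; exact absurd (congrArg Subtype.val h) (ne_of_gt hxy))]
          rw [ep, em]
          split_ifs <;> first | omega | (exfalso; linarith)
    · have hp' := hp; have hm' := hm
      rw [show (mkOne i₀ G hG0 hG1 _).f = oneE i₀ G from rfl, oneE_other hii] at hp' hm'
      have ep : sp = 0 := rslope_unique hp' (rs_zero _)
      have em : sm = 0 := lslope_unique hm' (ls_zero _)
      dsimp only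
      rw [ep, em, if_neg (by simp [hii]), if_neg (by simp [hii])]
      norm_num

lemma case_same_gt {n : ℕ} (i₀ : Fin n) (x₀ y : {x : ℝ // 0 < x ∧ x < 1})
    (h13 : 1/3 ≤ (x₀:ℝ)) (h23 : (x₀:ℝ) ≤ 2/3) (hyx : (x₀:ℝ) < (y:ℝ)) :
    ∃ F : BFn n, BEff n F (fun R => 3 * (if R = Sum.inr (i₀, x₀) then 1 else 0)
      - (if R = Sum.inr (i₀, y) then 1 else 0)) := by
  obtain ⟨hx0, hx1⟩ := x₀.2
  obtain ⟨hy0, hy1⟩ := y.2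
  set c : ℝ := (x₀:ℝ) with hc
  set b : ℝ := (y:ℝ) with hb
  set l : ℝ := (3 * (x₀:ℝ) - (y:ℝ)) / 2 with hl
  have h0l : (0:ℝ) ≤ l := by rw [hl]; linarith
  have h0ls : (0:ℝ) < l := by rw [hl]; linarith
  have hlc : l ≤ c := by rw [hl, hc]; linarith
  have hlcs : l < c := by rw [hl, hc]; linarith
  have hcb : c ≤ b := le_of_lt hyx
  have hb1 : b ≤ 1 := le_of_lt hy1
  set G : ℝ → ℝ := P4 l c b 0 (-2) 1 0 with hG
  have hG0 : G 0 = 0 := P4_zero h0l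
  have hG1 : G 1 = 0 := by
    rw [hG, P4_val₄ hlc hcb hb1]; push_cast; rw [hb, hc, hl]; ring
  refine ⟨mkOne i₀ G hG0 hG1 (P4_pa h0l hlc hcb hb1), ?_, ?_, ?_⟩
  · intro s hs
    have hz : ∀ i, i ≠ i₀ → s i = 0 := by
      intro i hi
      have h := hs i
      rw [show (mkOne i₀ G hG0 hG1 _).f = oneE i₀ G from rfl, oneE_other hi] at h
      exact rslope_unique h (rs_zero 0)
    have h := hs i₀
    rw [show (mkOne i₀ G hG0 hG1 _).f = oneE i₀ G from rfl, oneE_self] at h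
    have hi0 : s i₀ = 0 := rslope_unique h (P4_rs₁ h0ls)
    rw [sum_single_supp s i₀ hz, hi0]; simp
  · intro s hs
    have hz : ∀ i, i ≠ i₀ → s i = 0 := by
      intro i hi
      have h := hs i
      rw [show (mkOne i₀ G hG0 hG1 _).f = oneE i₀ G from rfl, oneE_other hi] at h
      exact lslope_unique h (ls_zero 1)
    have h := hs i₀
    rw [show (mkOne i₀ G hG0 hG1 _).f = oneE i₀ G from rfl, oneE_self] at h
    have hi0 : s i₀ = 0 := lslope_unique h (P4_ls₄ hlc hcb hy1)
    rw [sum_single_supp s i₀ hz, hi0]; simp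
  · intro i x sp sm hp hm
    by_cases hii : i = i₀
    · subst hii
      have hp' := hp; have hm' := hm
      rw [show (mkOne i G hG0 hG1 _).f = oneE i G from rfl, oneE_self] at hp' hm'
      have ep : sp = (if (x:ℝ) < l then 0 else if (x:ℝ) < c then -2
          else if (x:ℝ) < b then 1 else 0) := rslope_unique hp' (P4_rs hlc hcb _)
      have em : sm = (if b < (x:ℝ) then 0 else if c < (x:ℝ) then 1
          else if l < (x:ℝ) then -2 else 0) := lslope_unique hm' (P4_ls hlc hcb _)
      dsimp only
      rcases lt_trichotomy (x:ℝ) (y:ℝ) with hxy | hxy | hxy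
      · rcases lt_trichotomy (x:ℝ) (x₀:ℝ) with hxc | hxc | hxc
        · rw [if_neg (by simp; intro h; exact absurd (congrArg Subtype.val h) (ne_of_lt hxc)),
            if_neg (by simp; intro h; exact absurd (congrArg Subtype.val h) (ne_of_lt hxy))]
          rw [ep, em]
          split_ifs <;> first | omega | (exfalso; linarith)
        · rw [if_pos (by rw [Subtype.ext hxc]),
            if_neg (by simp; intro h; exact absurd (congrArg Subtype.val h) (ne_of_lt hxy))]
          rw [ep, em]
          split_ifs <;> first | omega | (exfalso; linarith)
        · rw [if_neg (by simp; intro h; exact absurd (congrArg Subtype.val h) (ne_of_gt hxc)),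
            if_neg (by simp; intro h; exact absurd (congrArg Subtype.val h) (ne_of_lt hxy))]
          rw [ep, em]
          split_ifs <;> first | omega | (exfalso; linarith)
      · rw [if_neg (by simp; intro h; exact absurd (congrArg Subtype.val h) (by rw [← hc]; intro hh; rw [hh] at hxy; linarith)),
          if_pos (by rw [Subtype.ext hxy])]
        rw [ep, em]
        split_ifs <;> first | omega | (exfalso; linarith)
      · rw [if_neg (by simp; intro h; exact absurd (congrArg Subtype.val h) (by rw [← hc]; intro hh; rw [hh] at hxy; linarith)),
          if_neg (by simp; intro h; exact absurd (congrArg Subtype.val h) (ne_of_gt hxy))]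
        rw [ep, em]
        split_ifs <;> first | omega | (exfalso; linarith)
    · have hp' := hp; have hm' := hm
      rw [show (mkOne i₀ G hG0 hG1 _).f = oneE i₀ G from rfl, oneE_other hii] at hp' hm'
      have ep : sp = 0 := rslope_unique hp' (rs_zero _)
      have em : sm = 0 := lslope_unique hm' (ls_zero _)
      dsimp only
      rw [ep, em, if_neg (by simp [hii]), if_neg (by simp [hii])]
      norm_num

lemma case_same_eq {n : ℕ} (i₀ : Fin n) (x₀ : {x : ℝ // 0 < x ∧ x < 1}) :
    ∃ F : BFn n, BEff n F (fun R => 3 * (if R = Sum.inr (i₀, x₀) then 1 else 0)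
      - (if R = Sum.inr (i₀, x₀) then 1 else 0)) := by
  refine ⟨mkOne i₀ (fun _ => 0) rfl rfl pa_zero, ?_, ?_, ?_⟩
  · intro s hs
    have hz : ∀ i, i ≠ i₀ → s i = 0 := by
      intro i hi
      have h := hs i
      rw [show (mkOne i₀ _ rfl rfl pa_zero).f = oneE i₀ (fun _ => 0) from rfl,
        oneE_other hi] at h
      exact rslope_unique h (rs_zero 0)
    have h := hs i₀
    rw [show (mkOne i₀ _ rfl rfl pa_zero).f = oneE i₀ (fun _ => 0) from rfl,
      oneE_self] at h
    have hi0 : s i₀ = 0 := rslope_unique h (rs_zero 0)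
    rw [sum_single_supp s i₀ hz, hi0]; simp
  · intro s hs
    have hz : ∀ i, i ≠ i₀ → s i = 0 := by
      intro i hi
      have h := hs i
      rw [show (mkOne i₀ _ rfl rfl pa_zero).f = oneE i₀ (fun _ => 0) from rfl,
        oneE_other hi] at h
      exact lslope_unique h (ls_zero 1)
    have h := hs i₀
    rw [show (mkOne i₀ _ rfl rfl pa_zero).f = oneE i₀ (fun _ => 0) from rfl,
      oneE_self] at h
    have hi0 : s i₀ = 0 := lslope_unique h (ls_zero 1)
    rw [sum_single_supp s i₀ hz, hi0]; simp
  · intro i x sp sm hp hm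
    have hfz : (mkOne i₀ (fun _ => (0:ℝ)) rfl rfl pa_zero).f i = fun _ => 0 := by
      by_cases hii : i = i₀
      · subst hii; exact oneE_self i (fun _ => 0)
      · exact oneE_other hii _
    rw [hfz] at hp hm
    have ep : sp = 0 := rslope_unique hp (rs_zero _)
    have em : sm = 0 := lslope_unique hm (ls_zero _)
    dsimp only
    rw [ep, em]
    split_ifs <;> omega

lemma case_other_le {n : ℕ} (i₀ j : Fin n) (hij : j ≠ i₀)
    (x₀ y : {x : ℝ // 0 < x ∧ x < 1})
    (h13 : 1/3 ≤ (x₀:ℝ)) (h2 : (x₀:ℝ) ≤ 1/2) :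
    ∃ F : BFn n, BEff n F (fun R => 3 * (if R = Sum.inr (i₀, x₀) then 1 else 0)
      - (if R = Sum.inr (j, y) then 1 else 0)) := by
  obtain ⟨hx0, hx1⟩ := x₀.2
  obtain ⟨hy0, hy1⟩ := y.2
  set c : ℝ := (x₀:ℝ) with hc
  set b : ℝ := (y:ℝ) with hb
  set ca : ℝ := 3 * (x₀:ℝ) - 1 with hca
  set w : ℝ := min b (1 - b) with hw
  set z : ℝ := max b (1 - b) with hz
  have h0ca : (0:ℝ) ≤ ca := by rw [hca]; linarith
  have hcac : ca ≤ c := by rw [hca, hc]; linarith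
  have hc1 : c ≤ 1 := le_of_lt hx1
  have h11 : (1:ℝ) ≤ 1 := le_refl 1
  have h0w : (0:ℝ) < w := by rw [hw]; simp [hb]; constructor <;> linarith
  have hwz : w ≤ z := min_le_max
  have hzz : z ≤ z := le_refl z
  have hz1 : z < 1 := by rw [hz]; simp [hb]; constructor <;> linarith
  have hwz1 : w + z = 1 := by rw [hw, hz, min_add_max]; ring
  set G : ℝ → ℝ := P4 ca c 1 (-1) (-2) 1 1 with hG
  set H : ℝ → ℝ := P4 w z z 1 0 (-1) (-1) with hH
  have hG0 : G 0 = 0 := P4_zero h0ca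
  have hG1 : G 1 = 0 := by
    rw [hG, P4_val₄ hcac hc1 h11]; push_cast; rw [hca, hc]; ring
  have hH0 : H 0 = 0 := P4_zero (le_of_lt h0w)
  have hH1 : H 1 = 0 := by
    rw [hH, P4_val₄ hwz hzz (le_of_lt hz1)]; push_cast; linarith
  refine ⟨mkTwo i₀ j G H hG0 hG1 hH0 hH1 (P4_pa h0ca hcac hc1 h11)
      (P4_pa (le_of_lt h0w) hwz hzz (le_of_lt hz1)), ?_, ?_, ?_⟩
  · intro s hs
    have hz0 : ∀ i, i ≠ i₀ → i ≠ j → s i = 0 := by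
      intro i hi hi'
      have h := hs i
      rw [show (mkTwo i₀ j G H hG0 hG1 hH0 hH1 _ _).f = twoE i₀ j G H from rfl,
        twoE_other hi hi'] at h
      exact rslope_unique h (rs_zero 0)
    have hj0 : s j = 1 := by
      have h := hs j
      rw [show (mkTwo i₀ j G H hG0 hG1 hH0 hH1 _ _).f = twoE i₀ j G H from rfl,
        twoE_snd hij] at h
      exact rslope_unique h (P4_rs₁ h0w)
    have h := hs i₀
    rw [show (mkTwo i₀ j G H hG0 hG1 hH0 hH1 _ _).f = twoE i₀ j G H from rfl,
      twoE_fst] at h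
    rcases lt_or_eq_of_le h0ca with hlt | heq
    · have hi0 : s i₀ = -1 := rslope_unique h (P4_rs₁ hlt)
      rw [sum_pair_supp s i₀ j (Ne.symm hij) hz0, hi0, hj0]; simp
    · have hi0 : s i₀ = -2 := rslope_unique h (P4_rs₂ (le_of_eq heq.symm) hx0)
      rw [sum_pair_supp s i₀ j (Ne.symm hij) hz0, hi0, hj0]; simp
  · intro s hs
    have hz0 : ∀ i, i ≠ i₀ → i ≠ j → s i = 0 := by
      intro i hi hi'
      have h := hs i
      rw [show (mkTwo i₀ j G H hG0 hG1 hH0 hH1 _ _).f = twoE i₀ j G H from rfl,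
        twoE_other hi hi'] at h
      exact lslope_unique h (ls_zero 1)
    have hj0 : s j = -1 := by
      have h := hs j
      rw [show (mkTwo i₀ j G H hG0 hG1 hH0 hH1 _ _).f = twoE i₀ j G H from rfl,
        twoE_snd hij] at h
      exact lslope_unique h (P4_ls₄ hwz hzz hz1)
    have hi0 : s i₀ = 1 := by
      have h := hs i₀
      rw [show (mkTwo i₀ j G H hG0 hG1 hH0 hH1 _ _).f = twoE i₀ j G H from rfl,
        twoE_fst] at h
      exact lslope_unique h (P4_ls₃ hcac hx1 h11)
    rw [sum_pair_supp s i₀ j (Ne.symm hij) hz0, hi0, hj0]; simp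
  · intro i x sp sm hp hm
    by_cases hii : i = i₀
    · subst hii
      have hp' := hp; have hm' := hm
      rw [show (mkTwo i j G H hG0 hG1 hH0 hH1 _ _).f = twoE i j G H from rfl,
        twoE_fst] at hp' hm'
      have ep : sp = (if (x:ℝ) < ca then -1 else if (x:ℝ) < c then -2
          else if (x:ℝ) < 1 then 1 else 1) := rslope_unique hp' (P4_rs hcac hc1 _)
      have em : sm = (if 1 < (x:ℝ) then 1 else if c < (x:ℝ) then 1
          else if ca < (x:ℝ) then -2 else -1) := lslope_unique hm' (P4_ls hcac hc1 _)
      dsimp only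
      rw [if_neg (show ¬ (Sum.inr (i, x) : BPt n) = Sum.inr (j, y) by
        simp; intro h; exact absurd h (Ne.symm hij))]
      rcases lt_trichotomy (x:ℝ) (x₀:ℝ) with hxc | hxc | hxc
      · rw [if_neg (by simp; intro h; exact absurd (congrArg Subtype.val h) (ne_of_lt hxc))]
        rw [ep, em]
        split_ifs <;> first | omega | (exfalso; linarith)
      · rw [if_pos (by rw [Subtype.ext hxc])]
        rw [ep, em]
        split_ifs <;> first | omega | (exfalso; linarith)
      · rw [if_neg (by simp; intro h; exact absurd (congrArg Subtype.val h) (ne_of_gt hxc))]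
        rw [ep, em]
        split_ifs <;> first | omega | (exfalso; linarith)
    · by_cases hjj : i = j
      · subst hjj
        have hp' := hp; have hm' := hm
        rw [show (mkTwo i₀ i G H hG0 hG1 hH0 hH1 _ _).f = twoE i₀ i G H from rfl,
          twoE_snd hii] at hp' hm'
        have ep : sp = (if (x:ℝ) < w then 1 else if (x:ℝ) < z then 0
            else if (x:ℝ) < z then -1 else -1) := rslope_unique hp' (P4_rs hwz hzz _)
        have em : sm = (if z < (x:ℝ) then -1 else if z < (x:ℝ) then -1
            else if w < (x:ℝ) then 0 else 1) := lslope_unique hm' (P4_ls hwz hzz _)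
        dsimp only
        rw [if_neg (show ¬ (Sum.inr (i, x) : BPt n) = Sum.inr (i₀, x₀) by
          simp; intro h; exact absurd h hii)]
        have hyw : b = w ∨ b = z := by
          rcases le_total b (1 - b) with hby | hby
          · left; rw [hw, min_eq_left hby]
          · right; rw [hz, max_eq_left hby]
        rcases lt_trichotomy (x:ℝ) (y:ℝ) with hxy | hxy | hxy
        · rw [if_neg (by simp; intro h; exact absurd (congrArg Subtype.val h) (ne_of_lt hxy))]
          rw [ep, em]
          rcases hyw with hyw | hyw <;>
            split_ifs <;> first | omega | (exfalso; rw [← hb] at *; linarith)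
        · rw [if_pos (by rw [Subtype.ext hxy])]
          rw [ep, em]
          rcases hyw with hyw | hyw <;>
            split_ifs <;> first | omega | (exfalso; rw [← hb] at *; linarith)
        · rw [if_neg (by simp; intro h; exact absurd (congrArg Subtype.val h) (ne_of_gt hxy))]
          rw [ep, em]
          rcases hyw with hyw | hyw <;>
            split_ifs <;> first | omega | (exfalso; rw [← hb] at *; linarith)
      · have hp' := hp; have hm' := hm
        rw [show (mkTwo i₀ j G H hG0 hG1 hH0 hH1 _ _).f = twoE i₀ j G H from rfl,
          twoE_other hii hjj] at hp' hm'
        have ep : sp = 0 := rslope_unique hp' (rs_zero _)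
        have em : sm = 0 := lslope_unique hm' (ls_zero _)
        dsimp only
        rw [ep, em, if_neg (by simp [hii]), if_neg (by simp [hjj])]
        norm_num

lemma case_other_ge {n : ℕ} (i₀ j : Fin n) (hij : j ≠ i₀)
    (x₀ y : {x : ℝ // 0 < x ∧ x < 1})
    (h2 : 1/2 ≤ (x₀:ℝ)) (h23 : (x₀:ℝ) ≤ 2/3) :
    ∃ F : BFn n, BEff n F (fun R => 3 * (if R = Sum.inr (i₀, x₀) then 1 else 0)
      - (if R = Sum.inr (j, y) then 1 else 0)) := by
  obtain ⟨hx0, hx1⟩ := x₀.2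
  obtain ⟨hy0, hy1⟩ := y.2
  set c : ℝ := (x₀:ℝ) with hc
  set b : ℝ := (y:ℝ) with hb
  set d : ℝ := 3 * (x₀:ℝ) - 1 with hd
  set w : ℝ := min b (1 - b) with hw
  set z : ℝ := max b (1 - b) with hz
  have h0c : (0:ℝ) ≤ c := le_of_lt hx0
  have hcd : c ≤ d := by rw [hd, hc]; linarith
  have hd1 : d ≤ 1 := by rw [hd]; linarith
  have h11 : (1:ℝ) ≤ 1 := le_refl 1
  have h0w : (0:ℝ) < w := by rw [hw]; simp [hb]; constructor <;> linarith
  have hwz : w ≤ z := min_le_max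
  have hzz : z ≤ z := le_refl z
  have hz1 : z < 1 := by rw [hz]; simp [hb]; constructor <;> linarith
  have hwz1 : w + z = 1 := by rw [hw, hz, min_add_max]; ring
  set G : ℝ → ℝ := P4 c d 1 (-1) 2 1 1 with hG
  set H : ℝ → ℝ := P4 w z z 1 0 (-1) (-1) with hH
  have hG0 : G 0 = 0 := P4_zero h0c
  have hG1 : G 1 = 0 := by
    rw [hG, P4_val₄ hcd hd1 h11]; push_cast; rw [hd, hc]; ring
  have hH0 : H 0 = 0 := P4_zero (le_of_lt h0w)
  have hH1 : H 1 = 0 := by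
    rw [hH, P4_val₄ hwz hzz (le_of_lt hz1)]; push_cast; linarith
  refine ⟨mkTwo i₀ j G H hG0 hG1 hH0 hH1 (P4_pa h0c hcd hd1 h11)
      (P4_pa (le_of_lt h0w) hwz hzz (le_of_lt hz1)), ?_, ?_, ?_⟩
  · intro s hs
    have hz0 : ∀ i, i ≠ i₀ → i ≠ j → s i = 0 := by
      intro i hi hi'
      have h := hs i
      rw [show (mkTwo i₀ j G H hG0 hG1 hH0 hH1 _ _).f = twoE i₀ j G H from rfl,
        twoE_other hi hi'] at h
      exact rslope_unique h (rs_zero 0)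
    have hj0 : s j = 1 := by
      have h := hs j
      rw [show (mkTwo i₀ j G H hG0 hG1 hH0 hH1 _ _).f = twoE i₀ j G H from rfl,
        twoE_snd hij] at h
      exact rslope_unique h (P4_rs₁ h0w)
    have hi0 : s i₀ = -1 := by
      have h := hs i₀
      rw [show (mkTwo i₀ j G H hG0 hG1 hH0 hH1 _ _).f = twoE i₀ j G H from rfl,
        twoE_fst] at h
      exact rslope_unique h (P4_rs₁ hx0)
    rw [sum_pair_supp s i₀ j (Ne.symm hij) hz0, hi0, hj0]; simp
  · intro s hs
    have hz0 : ∀ i, i ≠ i₀ → i ≠ j → s i = 0 := by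
      intro i hi hi'
      have h := hs i
      rw [show (mkTwo i₀ j G H hG0 hG1 hH0 hH1 _ _).f = twoE i₀ j G H from rfl,
        twoE_other hi hi'] at h
      exact lslope_unique h (ls_zero 1)
    have hj0 : s j = -1 := by
      have h := hs j
      rw [show (mkTwo i₀ j G H hG0 hG1 hH0 hH1 _ _).f = twoE i₀ j G H from rfl,
        twoE_snd hij] at h
      exact lslope_unique h (P4_ls₄ hwz hzz hz1)
    have h := hs i₀
    rw [show (mkTwo i₀ j G H hG0 hG1 hH0 hH1 _ _).f = twoE i₀ j G H from rfl,
      twoE_fst] at h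
    rcases lt_or_eq_of_le hd1 with hlt | heq
    · have hi0 : s i₀ = 1 := lslope_unique h (P4_ls₃ hcd hlt h11)
      rw [sum_pair_supp s i₀ j (Ne.symm hij) hz0, hi0, hj0]; simp
    · have hi0 : s i₀ = 2 := by
        refine lslope_unique h (P4_ls₂ ?_ (le_of_eq heq.symm))
        rw [hc]; rw [hd] at heq; linarith [heq]
      rw [sum_pair_supp s i₀ j (Ne.symm hij) hz0, hi0, hj0]; simp
  · intro i x sp sm hp hm
    by_cases hii : i = i₀
    · subst hii
      have hp' := hp; have hm' := hm
      rw [show (mkTwo i j G H hG0 hG1 hH0 hH1 _ _).f = twoE i j G H from rfl,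
        twoE_fst] at hp' hm'
      have ep : sp = (if (x:ℝ) < c then -1 else if (x:ℝ) < d then 2
          else if (x:ℝ) < 1 then 1 else 1) := rslope_unique hp' (P4_rs hcd hd1 _)
      have em : sm = (if 1 < (x:ℝ) then 1 else if d < (x:ℝ) then 1
          else if c < (x:ℝ) then 2 else -1) := lslope_unique hm' (P4_ls hcd hd1 _)
      dsimp only
      rw [if_neg (show ¬ (Sum.inr (i, x) : BPt n) = Sum.inr (j, y) by
        simp; intro h; exact absurd h (Ne.symm hij))]
      rcases lt_trichotomy (x:ℝ) (x₀:ℝ) with hxc | hxc | hxc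
      · rw [if_neg (by simp; intro h; exact absurd (congrArg Subtype.val h) (ne_of_lt hxc))]
        rw [ep, em]
        split_ifs <;> first | omega | (exfalso; linarith)
      · rw [if_pos (by rw [Subtype.ext hxc])]
        rw [ep, em]
        split_ifs <;> first | omega | (exfalso; linarith)
      · rw [if_neg (by simp; intro h; exact absurd (congrArg Subtype.val h) (ne_of_gt hxc))]
        rw [ep, em]
        split_ifs <;> first | omega | (exfalso; linarith)
    · by_cases hjj : i = j
      · subst hjj
        have hp' := hp; have hm' := hm
        rw [show (mkTwo i₀ i G H hG0 hG1 hH0 hH1 _ _).f = twoE i₀ i G H from rfl,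
          twoE_snd hii] at hp' hm'
        have ep : sp = (if (x:ℝ) < w then 1 else if (x:ℝ) < z then 0
            else if (x:ℝ) < z then -1 else -1) := rslope_unique hp' (P4_rs hwz hzz _)
        have em : sm = (if z < (x:ℝ) then -1 else if z < (x:ℝ) then -1
            else if w < (x:ℝ) then 0 else 1) := lslope_unique hm' (P4_ls hwz hzz _)
        dsimp only
        rw [if_neg (show ¬ (Sum.inr (i, x) : BPt n) = Sum.inr (i₀, x₀) by
          simp; intro h; exact absurd h hii)]
        have hyw : b = w ∨ b = z := by
          rcases le_total b (1 - b) with hby | hby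
          · left; rw [hw, min_eq_left hby]
          · right; rw [hz, max_eq_left hby]
        rcases lt_trichotomy (x:ℝ) (y:ℝ) with hxy | hxy | hxy
        · rw [if_neg (by simp; intro h; exact absurd (congrArg Subtype.val h) (ne_of_lt hxy))]
          rw [ep, em]
          rcases hyw with hyw | hyw <;>
            split_ifs <;> first | omega | (exfalso; rw [← hb] at *; linarith)
        · rw [if_pos (by rw [Subtype.ext hxy])]
          rw [ep, em]
          rcases hyw with hyw | hyw <;>
            split_ifs <;> first | omega | (exfalso; rw [← hb] at *; linarith)
        · rw [if_neg (by simp; intro h; exact absurd (congrArg Subtype.val h) (ne_of_gt hxy))]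
          rw [ep, em]
          rcases hyw with hyw | hyw <;>
            split_ifs <;> first | omega | (exfalso; rw [← hb] at *; linarith)
      · have hp' := hp; have hm' := hm
        rw [show (mkTwo i₀ j G H hG0 hG1 hH0 hH1 _ _).f = twoE i₀ j G H from rfl,
          twoE_other hii hjj] at hp' hm'
        have ep : sp = 0 := rslope_unique hp' (rs_zero _)
        have em : sm = 0 := lslope_unique hm' (ls_zero _)
        dsimp only
        rw [ep, em, if_neg (by simp [hii]), if_neg (by simp [hjj])]
        norm_num


/-- On the metric banana graph Γ with n ≥ 4 edges of length 1: for every point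
P = (i₀, x₀) with x₀ ∈ [1/3, 2/3], one has r(3(P)) ≥ 1, i.e., for every point
Q of Γ the divisor 3(P) - (Q) is equivalent to an effective divisor (there is
a rational function F with (F) + 3(P) - (Q) ≥ 0).  In particular, the set of
Weierstrass points of Γ (points P with r(g(P)) ≥ 1, g = n - 1 being the genus)
is infinite. -/
theorem banana_metric_weierstrass (n : ℕ) (hn : 4 ≤ n) :
    (∀ (i₀ : Fin n) (x₀ : {x : ℝ // 0 < x ∧ x < 1}),
      1 / 3 ≤ (x₀ : ℝ) → (x₀ : ℝ) ≤ 2 / 3 →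
      ∀ Q : BPt n, ∃ F : BFn n,
        BEff n F (fun R => 3 * (if R = Sum.inr (i₀, x₀) then 1 else 0)
          - (if R = Q then 1 else 0))) ∧
    {P : BPt n | ∀ Q : BPt n, ∃ F : BFn n,
        BEff n F (fun R => ((n : ℤ) - 1) * (if R = P then 1 else 0)
          - (if R = Q then 1 else 0))}.Infinite := by
  have main : ∀ (i₀ : Fin n) (x₀ : {x : ℝ // 0 < x ∧ x < 1}),
      1 / 3 ≤ (x₀ : ℝ) → (x₀ : ℝ) ≤ 2 / 3 →
      ∀ Q : BPt n, ∃ F : BFn n,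
        BEff n F (fun R => 3 * (if R = Sum.inr (i₀, x₀) then 1 else 0)
          - (if R = Q then 1 else 0)) := by
    intro i₀ x₀ h13 h23 Q
    match Q with
    | Sum.inl false => exact case_Qleft i₀ x₀ h13 h23
    | Sum.inl true => exact case_Qright i₀ x₀ h13 h23
    | Sum.inr (j, y) =>
      by_cases hij : j = i₀
      · subst hij
        rcases lt_trichotomy (y:ℝ) ((x₀:ℝ)) with h | h | h
        · exact case_same_lt j x₀ y h13 h23 h
        · have he : y = x₀ := Subtype.ext h
          subst he
          exact case_same_eq j y
        · exact case_same_gt j x₀ y h13 h23 h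
      · rcases le_total (x₀:ℝ) (1/2) with h | h
        · exact case_other_le i₀ j hij x₀ y h13 h
        · exact case_other_ge i₀ j hij x₀ y h h23
  refine ⟨main, ?_⟩
  have hnn : (3:ℤ) ≤ (n:ℤ) - 1 := by
    have : (4:ℤ) ≤ (n:ℤ) := by exact_mod_cast hn
    omega
  have i₀ : Fin n := ⟨0, by omega⟩
  haveI : Infinite (Set.Icc (1/3 : ℝ) (1/2)) :=
    (Set.Icc_infinite (by norm_num : (1/3:ℝ) < 1/2)).to_subtype
  apply Set.infinite_of_injective_forall_mem
    (f := fun a : Set.Icc (1/3 : ℝ) (1/2) =>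
      (Sum.inr (i₀, ⟨a.1, by
        obtain ⟨h1, h2⟩ := a.2
        constructor <;> [linarith; linarith]⟩) : BPt n))
  · intro a b hab
    simp only [Sum.inr.injEq, Prod.mk.injEq, Subtype.mk.injEq] at hab
    exact Subtype.ext hab.2
  · rintro ⟨xv, hx1, hx2⟩ Q
    obtain ⟨F, hF⟩ := main i₀ ⟨xv, by constructor <;> linarith⟩ hx1 (by linarith) Q
    refine ⟨F, BEff_mono (fun R => ?_) hF⟩
    split_ifs <;> omega
end
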